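/- Composition-Diamond lemma for L-algebras: let S be a set of monic elements of the free L-algebra L(X) with the weight-lexicographic monomial ordering on normal words. Then the following are equivalent: (I) S is a Gröbner–Shirshov basis in L(X) (all compositions of inclusion and of right multiplication are trivial); (II) for every nonzero f ∈ Id(S), the leading normal word f̄ equals u|_{s̄} for some s ∈ S and normal s-word u|_s; (III) Irr(S) = {u ∈ N : u ≠ v|_{s̄} for any s ∈ S and normal s-word v|_s} is a k-basis of L(X)/Id(S). -/

import Mathlib

/-- Ω-words for Ω = {≺, ≻}: `p u v` denotes u ≺ v and `s u v` denotes u ≻ v. -/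
inductive LW (X : Type) : Type
  | var : X → LW X
  | p : LW X → LW X → LW X
  | s : LW X → LW X → LW X
deriving DecidableEq

namespace LW

variable {X : Type}

/-- number of occurrences of variables, |u|_X -/
def szX : LW X → ℕ
  | var _ => 1
  | p u v => szX u + szX v
  | s u v => szX u + szX v

/-- The weight-lexicographic ordering on Ω-words: wt(x) = (1,x),
wt(δᵢ(u₁,u₂)) = (|u|_X, δᵢ, u₁, u₂) with ≻ < ≺, compared lexicographically. -/
inductive LLt [LinearOrder X] : LW X → LW X → Prop
  | size {u v : LW X} : szX u < szX v → LLt u v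
  | var {x y : X} : x < y → LLt (var x) (var y)
  | sp {u1 u2 v1 v2 : LW X} : szX (s u1 u2) = szX (p v1 v2) → LLt (s u1 u2) (p v1 v2)
  | s1 {u1 u2 v1 v2 : LW X} : szX (s u1 u2) = szX (s v1 v2) → LLt u1 v1 →
      LLt (s u1 u2) (s v1 v2)
  | s2 {u1 u2 v2 : LW X} : szX (s u1 u2) = szX (s u1 v2) → LLt u2 v2 →
      LLt (s u1 u2) (s u1 v2)
  | p1 {u1 u2 v1 v2 : LW X} : szX (p u1 u2) = szX (p v1 v2) → LLt u1 v1 →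
      LLt (p u1 u2) (p v1 v2)
  | p2 {u1 u2 v2 : LW X} : szX (p u1 u2) = szX (p u1 v2) → LLt u2 v2 →
      LLt (p u1 u2) (p u1 v2)

/-- Normal words: x ∈ X is normal; v ≻ w is normal if v, w are; v ≺ w is normal
if v, w are normal and v is not of the form v₁ ≻ v₂. -/
inductive Normal : LW X → Prop
  | var {x : X} : Normal (var x)
  | suc {u v : LW X} : Normal u → Normal v → Normal (s u v)
  | pre {u v : LW X} : Normal u → Normal v → (∀ a b, u ≠ s a b) → Normal (p u v)

end LW

/-- A ⋆-Ω-word for Ω = {≺,≻}. -/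
inductive LCtx (X : Type) : Type
  | hole : LCtx X
  | pL : LCtx X → LW X → LCtx X
  | pR : LW X → LCtx X → LCtx X
  | sL : LCtx X → LW X → LCtx X
  | sR : LW X → LCtx X → LCtx X

/-- Substitution of an Ω-word for ⋆ in a ⋆-Ω-word. -/
def LCtx.subst {X : Type} : LCtx X → LW X → LW X
  | .hole, u => u
  | .pL c w, u => .p (c.subst u) w
  | .pR w c, u => .p w (c.subst u)
  | .sL c w, u => .s (c.subst u) w
  | .sR w c, u => .s w (c.subst u)
namespace LW

variable {X : Type}

/-- The product [u ≺ v] for normal u, v. -/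
def nfP : LW X → LW X → LW X
  | .var x, v => .p (.var x) v
  | .p a b, v => .p (.p a b) v
  | .s a b, v => .s a (nfP b v)

/-- The normal form of an Ω-word modulo (x≻y)≺z = x≻(y≺z). -/
def nf : LW X → LW X
  | .var x => .var x
  | .p u v => nfP (nf u) (nf v)
  | .s u v => .s (nf u) (nf v)

theorem normal_nfP {u v : LW X} (hu : Normal u) (hv : Normal v) : Normal (nfP u v) := by
  induction u with
  | var x => exact Normal.pre hu hv (fun a b h => by cases h)
  | p a b iha ihb => exact Normal.pre hu hv (fun a b h => by cases h)
  | s a b iha ihb =>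
      cases hu with
      | suc ha hb => exact Normal.suc ha (ihb hb)

theorem normal_nf : ∀ u : LW X, Normal (nf u)
  | .var _ => Normal.var
  | .p u v => normal_nfP (normal_nf u) (normal_nf v)
  | .s u v => Normal.suc (normal_nf u) (normal_nf v)

end LW

/-- The set N of normal words. -/
abbrev NW (X : Type) := {w : LW X // LW.Normal w}

/-- Normal form as a map into N. -/
def nfN {X : Type} (w : LW X) : NW X := ⟨LW.nf w, LW.normal_nf w⟩
section LFree

variable {X k : Type} [Field k] [LinearOrder X]

/-- The free L-algebra L(X) realized as the k-space with basis the normal words. -/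
abbrev LFree (X k : Type) [Field k] := NW X →₀ k

/-- The s-word u|_s in L(X): substitute into the ⋆-Ω-word c and take normal
forms, extended linearly. -/
noncomputable def lapp (c : LCtx X) (f : LFree X k) : LFree X k :=
  Finsupp.mapDomain (fun w => nfN (c.subst w.1)) f

/-- `NIsLw f w`: w is the leading normal word of f ∈ L(X). -/
def NIsLw (f : LFree X k) (w : NW X) : Prop :=
  w ∈ f.support ∧ ∀ v ∈ f.support, v ≠ w → LW.LLt v.1 w.1

/-- f is monic. -/
def NMonic (f : LFree X k) : Prop := ∃ w, NIsLw f w ∧ f w = 1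

/-- The ideal of L(X) generated by S. -/
noncomputable def NIdS (S : Set (LFree X k)) : Submodule k (LFree X k) :=
  Submodule.span k {g | ∃ (c : LCtx X) (s : LFree X k), s ∈ S ∧ g = lapp c s}

/-- h is a linear combination Σ αᵢ uᵢ|_{sᵢ} of normal sᵢ-words with sᵢ ∈ S and
uᵢ|_{s̄ᵢ} < w. -/
def NTrivLt (S : Set (LFree X k)) (w : NW X) (h : LFree X k) : Prop :=
  ∃ (n : ℕ) (α : Fin n → k) (c : Fin n → LCtx X) (s : Fin n → LFree X k),
    (∀ i, s i ∈ S) ∧ h = ∑ i, α i • lapp (c i) (s i) ∧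
    ∀ i, ∃ ws, NIsLw (s i) ws ∧ LW.Normal ((c i).subst ws.1) ∧
      LW.LLt ((c i).subst ws.1) w.1

/-- h is a linear combination Σ αᵢ uᵢ|_{sᵢ} of normal sᵢ-words with sᵢ ∈ S and
uᵢ|_{s̄ᵢ} ≤ w. -/
def NTrivLe (S : Set (LFree X k)) (w : NW X) (h : LFree X k) : Prop :=
  ∃ (n : ℕ) (α : Fin n → k) (c : Fin n → LCtx X) (s : Fin n → LFree X k),
    (∀ i, s i ∈ S) ∧ h = ∑ i, α i • lapp (c i) (s i) ∧
    ∀ i, ∃ ws, NIsLw (s i) ws ∧ LW.Normal ((c i).subst ws.1) ∧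
      ((c i).subst ws.1 = w.1 ∨ LW.LLt ((c i).subst ws.1) w.1)

/-- All compositions of right multiplication in S are trivial mod S: whenever the
leading word of f ∈ S has the form u₁ ≻ u₂ and v is a normal word, f ≺ v is a
combination of normal s-words with leading words ≤ the leading word of f ≺ v. -/
def RightMultTrivial (S : Set (LFree X k)) : Prop :=
  ∀ f ∈ S, ∀ wf, NIsLw f wf → (∃ u1 u2, wf.1 = .s u1 u2) →
    ∀ v : NW X, ∀ wfv, NIsLw (lapp (.pL .hole v.1) f) wfv →
      NTrivLe S wfv (lapp (.pL .hole v.1) f)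

/-- All compositions of inclusion in S are trivial: whenever w = f̄ = u|_{ḡ} with
u|_g a normal g-word, (f,g)_w = f − u|_g is trivial mod (S, w). -/
def InclusionTrivial (S : Set (LFree X k)) : Prop :=
  ∀ f ∈ S, ∀ g ∈ S, ∀ (c : LCtx X) (wf wg : NW X),
    NIsLw f wf → NIsLw g wg → LW.Normal (c.subst wg.1) → wf.1 = c.subst wg.1 →
      NTrivLt S wf (f - lapp c g)

/-- S is a Gröbner–Shirshov basis in L(X). -/
def NIsGSB (S : Set (LFree X k)) : Prop := RightMultTrivial S ∧ InclusionTrivial S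

end LFree
set_option linter.unusedSectionVars false

section OrderBasics

namespace LW

variable {X : Type} [LinearOrder X]

theorem szX_pos (u : LW X) : 0 < szX u := by
  induction u with
  | var x => simp [szX]
  | p a b ha hb => simp [szX]; omega
  | s a b ha hb => simp [szX]; omega

theorem LLt.le_szX {u v : LW X} (h : LLt u v) : szX u ≤ szX v := by
  cases h with
  | size h => exact h.le
  | var _ => exact le_rfl
  | sp h => exact h.le
  | s1 h _ => exact h.le
  | s2 h _ => exact h.le
  | p1 h _ => exact h.le
  | p2 h _ => exact h.le

theorem llt_irrefl (u : LW X) : ¬ LLt u u := by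
  induction u with
  | var x => intro h; cases h with
    | size h => omega
    | var h => exact lt_irrefl _ h
  | p a b ha hb => intro h; cases h with
    | size h => omega
    | p1 _ h => exact ha h
    | p2 _ h => exact hb h
  | s a b ha hb => intro h; cases h with
    | size h => omega
    | s1 _ h => exact ha h
    | s2 _ h => exact hb h

theorem llt_trans : ∀ {u v w : LW X}, LLt u v → LLt v w → LLt u w := by
  intro u
  induction u with
  | var x =>
    intro v w h1 h2
    cases h1 with
    | size h => exact .size (lt_of_lt_of_le h h2.le_szX)
    | var h =>
      cases h2 with
      | size h' => exact .size (by simpa [szX] using h')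
      | var h' => exact .var (lt_trans h h')
  | s a b ha hb =>
    intro v w h1 h2
    cases h1 with
    | size h => exact .size (lt_of_lt_of_le h h2.le_szX)
    | sp h =>
      cases h2 with
      | size h' => exact .size (by omega)
      | p1 h' _ => exact .sp (by simp_all [szX])
      | p2 h' _ => exact .sp (by simp_all [szX])
    | s1 h hl =>
      cases h2 with
      | size h' => exact .size (by omega)
      | sp h' => exact .sp (by simp_all [szX])
      | s1 h' hl' => exact .s1 (by simp_all [szX]) (ha hl hl')
      | s2 h' hl' => exact .s1 (by simp_all [szX]) hl
    | s2 h hl =>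
      cases h2 with
      | size h' => exact .size (by omega)
      | sp h' => exact .sp (by simp_all [szX])
      | s1 h' hl' => exact .s1 (by simp_all [szX]) hl'
      | s2 h' hl' => exact .s2 (by simp_all [szX]) (hb hl hl')
  | p a b ha hb =>
    intro v w h1 h2
    cases h1 with
    | size h => exact .size (lt_of_lt_of_le h h2.le_szX)
    | p1 h hl =>
      cases h2 with
      | size h' => exact .size (by omega)
      | p1 h' hl' => exact .p1 (by simp_all [szX]) (ha hl hl')
      | p2 h' hl' => exact .p1 (by simp_all [szX]) hl
    | p2 h hl =>
      cases h2 with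
      | size h' => exact .size (by omega)
      | p1 h' hl' => exact .p1 (by simp_all [szX]) hl'
      | p2 h' hl' => exact .p2 (by simp_all [szX]) (hb hl hl')

theorem llt_trichotomy : ∀ (u v : LW X), LLt u v ∨ u = v ∨ LLt v u := by
  intro u
  induction u with
  | var x =>
    intro v
    rcases lt_trichotomy (szX (var x : LW X)) (szX v) with h | h | h
    · exact .inl (.size h)
    · cases v with
      | var y =>
        rcases lt_trichotomy x y with h' | h' | h'
        · exact .inl (.var h')
        · exact .inr (.inl (by rw [h']))
        · exact .inr (.inr (.var h'))
      | p a b => simp [szX] at h; have := szX_pos a; have := szX_pos b; omega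
      | s a b => simp [szX] at h; have := szX_pos a; have := szX_pos b; omega
    · exact .inr (.inr (.size h))
  | s a b ha hb =>
    intro v
    rcases lt_trichotomy (szX (s a b)) (szX v) with h | h | h
    · exact .inl (.size h)
    · cases v with
      | var y => simp [szX] at h; have := szX_pos a; have := szX_pos b; omega
      | p c d => exact .inl (.sp h)
      | s c d =>
        rcases ha c with h1 | h1 | h1
        · exact .inl (.s1 h h1)
        · subst h1
          rcases hb d with h2 | h2 | h2
          · exact .inl (.s2 h h2)
          · exact .inr (.inl (by rw [h2]))
          · exact .inr (.inr (.s2 h.symm h2))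
        · exact .inr (.inr (.s1 h.symm h1))
    · exact .inr (.inr (.size h))
  | p a b ha hb =>
    intro v
    rcases lt_trichotomy (szX (p a b)) (szX v) with h | h | h
    · exact .inl (.size h)
    · cases v with
      | var y => simp [szX] at h; have := szX_pos a; have := szX_pos b; omega
      | s c d => exact .inr (.inr (.sp h.symm))
      | p c d =>
        rcases ha c with h1 | h1 | h1
        · exact .inl (.p1 h h1)
        · subst h1
          rcases hb d with h2 | h2 | h2
          · exact .inl (.p2 h h2)
          · exact .inr (.inl (by rw [h2]))
          · exact .inr (.inr (.p2 h.symm h2))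
        · exact .inr (.inr (.p1 h.symm h1))
    · exact .inr (.inr (.size h))

theorem llt_asymm {u v : LW X} (h : LLt u v) : ¬ LLt v u :=
  fun h' => llt_irrefl u (llt_trans h h')

end LW

end OrderBasics
section WFOrder

namespace LW

variable {X : Type} [LinearOrder X]

theorem acc_var [WellFoundedLT X] (x : X) : Acc (LLt (X := X)) (var x) := by
  induction x using WellFoundedLT.induction with
  | _ x ih =>
    constructor
    intro v hv
    cases hv with
    | size h => have := szX_pos v; simp [szX] at h; omega
    | var h => exact ih _ h

theorem acc_s {n : ℕ} (hsm : ∀ v : LW X, szX v < n → Acc LLt v) :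
    ∀ a : LW X, Acc LLt a → ∀ b : LW X, Acc LLt b → szX a + szX b = n →
      Acc LLt (s a b) := by
  intro a ha
  induction ha with
  | _ a _ iha =>
    intro b hb
    induction hb with
    | _ b hb ihb =>
      intro hn
      constructor
      intro v hv
      cases hv with
      | size h => exact hsm v (by simpa [szX, hn] using h)
      | s1 h h1 =>
        rename_i a' b'
        exact iha _ h1 _ (hsm _ (by simp [szX] at h ⊢; have := szX_pos a'; omega))
          (by simp [szX] at h; omega)
      | s2 h h1 => exact ihb _ h1 (by simp [szX] at h; omega)

theorem acc_p {n : ℕ} (hsm : ∀ v : LW X, szX v < n → Acc LLt v) :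
    ∀ a : LW X, Acc LLt a → ∀ b : LW X, Acc LLt b → szX a + szX b = n →
      Acc LLt (p a b) := by
  intro a ha
  induction ha with
  | _ a _ iha =>
    intro b hb
    induction hb with
    | _ b hb ihb =>
      intro hn
      constructor
      intro v hv
      cases hv with
      | size h => exact hsm v (by simpa [szX, hn] using h)
      | sp h =>
        rename_i u1 u2
        refine acc_s hsm u1 (hsm _ ?_) u2 (hsm _ ?_) (by simp [szX] at h; omega) <;>
          (simp [szX] at h; have := szX_pos u1; have := szX_pos u2; omega)
      | p1 h h1 =>
        rename_i a' b'
        exact iha _ h1 _ (hsm _ (by simp [szX] at h ⊢; have := szX_pos a'; omega))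
          (by simp [szX] at h; omega)
      | p2 h h1 => exact ihb _ h1 (by simp [szX] at h; omega)

theorem llt_wf [WellFoundedLT X] : WellFounded (LLt (X := X)) := by
  have key : ∀ n : ℕ, ∀ u : LW X, szX u ≤ n → Acc LLt u := by
    intro n
    induction n with
    | zero => intro u hu; have := szX_pos u; omega
    | succ n ih =>
      intro u hu
      have hsm : ∀ v : LW X, szX v < szX u → Acc LLt v := fun v hv => ih v (by omega)
      cases u with
      | var x => exact acc_var x
      | s a b =>
        exact acc_s hsm a (hsm _ (by simp [szX]; have := szX_pos b; omega))
          b (hsm _ (by simp [szX]; have := szX_pos a; omega)) rfl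
      | p a b =>
        exact acc_p hsm a (hsm _ (by simp [szX]; have := szX_pos b; omega))
          b (hsm _ (by simp [szX]; have := szX_pos a; omega)) rfl
  exact ⟨fun u => key (szX u) u le_rfl⟩

end LW

variable {X : Type} [LinearOrder X]

instance : IsStrictTotalOrder (NW X) (fun u v => LW.LLt u.1 v.1) where
  trichotomous := by
    intro u v h1 h2
    rcases LW.llt_trichotomy u.1 v.1 with h | h | h
    · exact absurd h h1
    · exact Subtype.ext h
    · exact absurd h h2
  irrefl := fun u => LW.llt_irrefl u.1
  trans := fun _ _ _ h1 h2 => LW.llt_trans h1 h2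

noncomputable instance : LinearOrder (NW X) :=
  letI : DecidableRel (fun u v : NW X => LW.LLt u.1 v.1) := Classical.decRel _
  linearOrderOfSTO (fun u v : NW X => LW.LLt u.1 v.1)

theorem nw_lt_iff {u v : NW X} : u < v ↔ LW.LLt u.1 v.1 := Iff.rfl

instance [WellFoundedLT X] : WellFoundedLT (NW X) :=
  ⟨Subrelation.wf (fun h => nw_lt_iff.mp h) (InvImage.wf (fun u : NW X => u.1) LW.llt_wf)⟩

end WFOrder
section NfLemmas

namespace LW

variable {X : Type} [LinearOrder X]

omit [LinearOrder X] in
theorem szX_nfP (u v : LW X) : szX (nfP u v) = szX u + szX v := by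
  induction u generalizing v with
  | var x => simp [nfP, szX]
  | p a b ha hb => simp [nfP, szX]
  | s a b ha hb => simp [nfP, szX, hb]; omega

omit [LinearOrder X] in
theorem szX_nf (u : LW X) : szX (nf u) = szX u := by
  induction u with
  | var x => simp [nf]
  | p a b ha hb => simp [nf, szX, szX_nfP, ha, hb]
  | s a b ha hb => simp [nf, szX, ha, hb]

omit [LinearOrder X] in
theorem nfP_eq_of_ns {u : LW X} (h : ∀ a b, u ≠ s a b) (v : LW X) :
    nfP u v = p u v := by
  cases u with
  | var x => rfl
  | p a b => rfl
  | s a b => exact absurd rfl (h a b)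

omit [LinearOrder X] in
theorem nf_normal {u : LW X} (h : Normal u) : nf u = u := by
  induction h with
  | var => rfl
  | suc _ _ ih1 ih2 => simp [nf, ih1, ih2]
  | pre _ _ hns ih1 ih2 => simp [nf, ih1, ih2, nfP_eq_of_ns hns]

omit [LinearOrder X] in
theorem nf_nf (u : LW X) : nf (nf u) = nf u := nf_normal (normal_nf u)

omit [LinearOrder X] in
theorem nf_subst_nf (c : LCtx X) (x : LW X) : nf (c.subst (nf x)) = nf (c.subst x) := by
  induction c with
  | hole => exact nf_nf x
  | pL c w ih => simp [LCtx.subst, nf, ih]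
  | pR w c ih => simp [LCtx.subst, nf, ih]
  | sL c w ih => simp [LCtx.subst, nf, ih]
  | sR w c ih => simp [LCtx.subst, nf, ih]

theorem llt_s1' {x x' b : LW X} (h : LLt x x') : LLt (s x b) (s x' b) := by
  rcases lt_or_eq_of_le h.le_szX with h' | h'
  · exact .size (by simp [szX]; omega)
  · exact .s1 (by simp [szX]; omega) h

theorem llt_s2' {a y y' : LW X} (h : LLt y y') : LLt (s a y) (s a y') := by
  rcases lt_or_eq_of_le h.le_szX with h' | h'
  · exact .size (by simp [szX]; omega)
  · exact .s2 (by simp [szX]; omega) h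

theorem llt_p1' {x x' b : LW X} (h : LLt x x') : LLt (p x b) (p x' b) := by
  rcases lt_or_eq_of_le h.le_szX with h' | h'
  · exact .size (by simp [szX]; omega)
  · exact .p1 (by simp [szX]; omega) h

theorem llt_p2' {a y y' : LW X} (h : LLt y y') : LLt (p a y) (p a y') := by
  rcases lt_or_eq_of_le h.le_szX with h' | h'
  · exact .size (by simp [szX]; omega)
  · exact .p2 (by simp [szX]; omega) h

theorem llt_nfP_left {u v : LW X} (h : LLt u v) (w : LW X) :
    LLt (nfP u w) (nfP v w) := by
  induction h generalizing w with
  | size h => exact .size (by simp [szX_nfP]; omega)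
  | var h => exact llt_p1' (.var h)
  | sp h =>
    rename_i u1 u2 v1 v2
    exact .sp (by simp [szX, szX_nfP] at h ⊢; omega)
  | s1 h h1 =>
    rename_i u1 u2 v1 v2
    exact .s1 (by simp [szX, szX_nfP] at h ⊢; omega) h1
  | s2 h h1 ih =>
    rename_i u1 u2 v2
    exact .s2 (by simp [szX, szX_nfP] at h ⊢; omega) (ih w)
  | p1 h h1 => exact llt_p1' (.p1 h h1)
  | p2 h h1 => exact llt_p1' (.p2 h h1)

theorem llt_nfP_right {w w' : LW X} (u : LW X) (h : LLt w w') :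
    LLt (nfP u w) (nfP u w') := by
  induction u with
  | var x => exact llt_p2' h
  | p a b _ _ => exact llt_p2' h
  | s a b _ ihb => exact llt_s2' ihb

theorem llt_subst_nf {u v : LW X} (hu : Normal u) (hv : Normal v) (h : LLt u v)
    (c : LCtx X) : LLt (nf (c.subst u)) (nf (c.subst v)) := by
  induction c with
  | hole => simpa [LCtx.subst, nf_normal hu, nf_normal hv] using h
  | pL c w ih => simpa [LCtx.subst, nf] using llt_nfP_left ih _
  | pR w c ih => simpa [LCtx.subst, nf] using llt_nfP_right _ ih
  | sL c w ih => simpa [LCtx.subst, nf] using llt_s1' ih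
  | sR w c ih => simpa [LCtx.subst, nf] using llt_s2' ih

end LW

end NfLemmas
/-- Composition of ⋆-Ω-words. -/
def LCtx.comp {X : Type} : LCtx X → LCtx X → LCtx X
  | .hole, d => d
  | .pL c w, d => .pL (c.comp d) w
  | .pR w c, d => .pR w (c.comp d)
  | .sL c w, d => .sL (c.comp d) w
  | .sR w c, d => .sR w (c.comp d)

theorem LCtx.subst_comp {X : Type} (c d : LCtx X) (x : LW X) :
    (c.comp d).subst x = c.subst (d.subst x) := by
  induction c with
  | hole => rfl
  | pL c w ih => simp [comp, subst, ih]
  | pR w c ih => simp [comp, subst, ih]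
  | sL c w ih => simp [comp, subst, ih]
  | sR w c ih => simp [comp, subst, ih]

section LappLemmas

variable {X k : Type} [Field k] [LinearOrder X]

theorem nfN_normal (w : NW X) : nfN w.1 = w := Subtype.ext (LW.nf_normal w.2)

theorem lapp_hole (f : LFree X k) : lapp .hole f = f := by
  have : (fun w : NW X => nfN ((LCtx.hole : LCtx X).subst w.1)) = id := by
    funext w; exact nfN_normal w
  rw [lapp, this, Finsupp.mapDomain_id]

theorem lapp_single (c : LCtx X) (v : NW X) (κ : k) :
    lapp c (Finsupp.single v κ) = Finsupp.single (nfN (c.subst v.1)) κ :=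
  Finsupp.mapDomain_single

theorem lapp_add (c : LCtx X) (f g : LFree X k) :
    lapp c (f + g) = lapp c f + lapp c g := Finsupp.mapDomain_add

theorem lapp_smul (c : LCtx X) (κ : k) (f : LFree X k) :
    lapp c (κ • f) = κ • lapp c f := Finsupp.mapDomain_smul _ _

theorem lapp_sub (c : LCtx X) (f g : LFree X k) :
    lapp c (f - g) = lapp c f - lapp c g := by
  have := lapp_add c (f - g) g
  simp at this
  rw [this]; abel

theorem lapp_zero (c : LCtx X) : lapp c (0 : LFree X k) = 0 := Finsupp.mapDomain_zero

theorem lapp_lapp (c d : LCtx X) (f : LFree X k) :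
    lapp c (lapp d f) = lapp (c.comp d) f := by
  rw [lapp, lapp, ← Finsupp.mapDomain_comp, lapp]
  congr 1
  funext w
  simp only [Function.comp]
  exact Subtype.ext (by simp [nfN, LW.nf_subst_nf, LCtx.subst_comp])

theorem lapp_support {c : LCtx X} {f : LFree X k} {u : NW X}
    (hu : u ∈ (lapp c f).support) :
    ∃ v ∈ f.support, u = nfN (c.subst v.1) := by
  have := Finsupp.mapDomain_support hu
  simp only [Finset.mem_image] at this
  obtain ⟨v, hv, he⟩ := this
  exact ⟨v, hv, he.symm⟩

theorem lapp_apply_lead {s : LFree X k} {ws : NW X} (h : NIsLw s ws) (c : LCtx X) :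
    (lapp c s) (nfN (c.subst ws.1)) = s ws := by
  classical
  rw [lapp, Finsupp.mapDomain, Finsupp.sum, Finsupp.finset_sum_apply]
  rw [Finset.sum_eq_single ws]
  · simp
  · intro v hv hne
    have hlt := LW.llt_subst_nf v.2 ws.2 (h.2 v hv hne) c
    have : nfN (c.subst v.1) ≠ nfN (c.subst ws.1) := by
      intro he
      have h2 : LW.nf (c.subst v.1) = LW.nf (c.subst ws.1) := congrArg Subtype.val he
      rw [h2] at hlt
      exact LW.llt_irrefl _ hlt
    simp [Finsupp.single_apply, this]
  · intro hws
    simp [Finsupp.notMem_support_iff.mp hws]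

theorem lapp_lead {s : LFree X k} {ws : NW X} (h : NIsLw s ws) (c : LCtx X) :
    NIsLw (lapp c s) (nfN (c.subst ws.1)) := by
  constructor
  · rw [Finsupp.mem_support_iff, lapp_apply_lead h c]
    exact Finsupp.mem_support_iff.mp h.1
  · intro u hu hne
    obtain ⟨v, hv, he⟩ := lapp_support hu
    subst he
    have hvne : v ≠ ws := by rintro rfl; exact hne rfl
    exact LW.llt_subst_nf v.2 ws.2 (h.2 v hv hvne) c

theorem NIsLw.unique {f : LFree X k} {w w' : NW X} (h : NIsLw f w) (h' : NIsLw f w') :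
    w = w' := by
  by_contra hne
  exact LW.llt_asymm (h.2 w' h'.1 (Ne.symm hne)) (h'.2 w h.1 hne)

theorem exists_NIsLw {f : LFree X k} (hf : f ≠ 0) : ∃ w, NIsLw f w := by
  have hne : f.support.Nonempty := Finsupp.support_nonempty_iff.mpr hf
  refine ⟨f.support.max' hne, f.support.max'_mem hne, fun v hv hne' => ?_⟩
  exact nw_lt_iff.mp (lt_of_le_of_ne (f.support.le_max' v hv) (by simpa using hne'))

theorem NIsLw.mem_le {f : LFree X k} {w : NW X} (h : NIsLw f w) {v : NW X}
    (hv : v ∈ f.support) : v ≤ w := by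
  rcases eq_or_ne v w with rfl | hne
  · exact le_rfl
  · exact le_of_lt (nw_lt_iff.mpr (h.2 v hv hne))

end LappLemmas
section RepMachinery

variable {X k : Type} [Field k] [LinearOrder X]

/-- A term of a representation: (coefficient, context, element of S, its leading word). -/
abbrev LTm (X k : Type) [Field k] : Type := k × LCtx X × LFree X k × NW X

variable (S : Set (LFree X k))

def TmOK (t : LTm X k) : Prop :=
  t.2.2.1 ∈ S ∧ NIsLw t.2.2.1 t.2.2.2 ∧ LW.Normal (t.2.1.subst t.2.2.2.1)

def tmW (t : LTm X k) : LW X := t.2.1.subst t.2.2.2.1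

noncomputable def tmVal (t : LTm X k) : LFree X k := t.1 • lapp t.2.1 t.2.2.1

noncomputable def lsum (l : List (LTm X k)) : LFree X k := (l.map (tmVal)).sum

theorem lsum_nil : lsum ([] : List (LTm X k)) = 0 := rfl

theorem lsum_cons (t : LTm X k) (l : List (LTm X k)) :
    lsum (t :: l) = tmVal t + lsum l := by simp [lsum]

theorem lsum_append (l₁ l₂ : List (LTm X k)) :
    lsum (l₁ ++ l₂) = lsum l₁ + lsum l₂ := by simp [lsum]

theorem lsum_perm {l₁ l₂ : List (LTm X k)} (h : l₁.Perm l₂) : lsum l₁ = lsum l₂ :=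
  List.Perm.sum_eq (List.Perm.map _ h)

/-- bound: every term word is ≤ w (resp. < w). -/
def WLe (a : LW X) (w : NW X) : Prop := a = w.1 ∨ LW.LLt a w.1

def TLe (w : NW X) (h : LFree X k) : Prop :=
  ∃ l, (∀ t ∈ l, TmOK S t) ∧ h = lsum l ∧ ∀ t ∈ l, WLe (tmW t) w

def TLt (w : NW X) (h : LFree X k) : Prop :=
  ∃ l, (∀ t ∈ l, TmOK S t) ∧ h = lsum l ∧ ∀ t ∈ l, LW.LLt (tmW t) w.1

theorem TLe_iff_NTrivLe {w : NW X} {h : LFree X k} : TLe S w h ↔ NTrivLe S w h := by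
  constructor
  · rintro ⟨l, hOK, rfl, hb⟩
    induction l with
    | nil =>
      exact ⟨0, finZeroElim, finZeroElim, finZeroElim, finZeroElim, by simp [lsum_nil],
        finZeroElim⟩
    | cons t l ih =>
      obtain ⟨n, α, c, s, h1, h2, h3⟩ := ih (fun t ht => hOK t (by simp [ht]))
        (fun t ht => hb t (by simp [ht]))
      refine ⟨n + 1, Fin.cons t.1 α, Fin.cons t.2.1 c, Fin.cons t.2.2.1 s, ?_, ?_, ?_⟩
      · intro i
        induction i using Fin.cases with
        | zero => simpa using (hOK t (by simp)).1
        | succ i => simpa using h1 i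
      · rw [lsum_cons, Fin.sum_univ_succ]
        simp only [Fin.cons_zero, Fin.cons_succ]
        rw [← h2]; rfl
      · intro i
        induction i using Fin.cases with
        | zero =>
          obtain ⟨hs, hlw, hnorm⟩ := hOK t (by simp)
          refine ⟨t.2.2.2, hlw, by simpa [tmW] using hnorm, ?_⟩
          have := hb t (by simp)
          simp only [Fin.cons_zero]
          rcases this with h | h
          · exact .inl h
          · exact .inr h
        | succ i => simpa using h3 i
  · rintro ⟨n, α, c, s, h1, rfl, h3⟩
    classical
    refine ⟨List.ofFn (fun i => (α i, c i, s i, Classical.choose (h3 i))), ?_, ?_, ?_⟩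
    · intro t ht
      rw [List.mem_ofFn] at ht
      obtain ⟨i, rfl⟩ := ht
      obtain ⟨hlw, hnorm, _⟩ := Classical.choose_spec (h3 i)
      exact ⟨h1 i, hlw, hnorm⟩
    · rw [lsum, List.map_ofFn, List.sum_ofFn]; rfl
    · intro t ht
      rw [List.mem_ofFn] at ht
      obtain ⟨i, rfl⟩ := ht
      obtain ⟨_, _, hle⟩ := Classical.choose_spec (h3 i)
      rcases hle with h | h
      · exact .inl h
      · exact .inr h

theorem TLt_iff_NTrivLt {w : NW X} {h : LFree X k} : TLt S w h ↔ NTrivLt S w h := by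
  constructor
  · rintro ⟨l, hOK, rfl, hb⟩
    induction l with
    | nil =>
      exact ⟨0, finZeroElim, finZeroElim, finZeroElim, finZeroElim, by simp [lsum_nil],
        finZeroElim⟩
    | cons t l ih =>
      obtain ⟨n, α, c, s, h1, h2, h3⟩ := ih (fun t ht => hOK t (by simp [ht]))
        (fun t ht => hb t (by simp [ht]))
      refine ⟨n + 1, Fin.cons t.1 α, Fin.cons t.2.1 c, Fin.cons t.2.2.1 s, ?_, ?_, ?_⟩
      · intro i
        induction i using Fin.cases with
        | zero => simpa using (hOK t (by simp)).1
        | succ i => simpa using h1 i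
      · rw [lsum_cons, Fin.sum_univ_succ]
        simp only [Fin.cons_zero, Fin.cons_succ]
        rw [← h2]; rfl
      · intro i
        induction i using Fin.cases with
        | zero =>
          obtain ⟨hs, hlw, hnorm⟩ := hOK t (by simp)
          exact ⟨t.2.2.2, hlw, by simpa [tmW] using hnorm, by simpa [tmW] using hb t (by simp)⟩
        | succ i => simpa using h3 i
  · rintro ⟨n, α, c, s, h1, rfl, h3⟩
    classical
    refine ⟨List.ofFn (fun i => (α i, c i, s i, Classical.choose (h3 i))), ?_, ?_, ?_⟩
    · intro t ht
      rw [List.mem_ofFn] at ht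
      obtain ⟨i, rfl⟩ := ht
      obtain ⟨hlw, hnorm, _⟩ := Classical.choose_spec (h3 i)
      exact ⟨h1 i, hlw, hnorm⟩
    · rw [lsum, List.map_ofFn, List.sum_ofFn]; rfl
    · intro t ht
      rw [List.mem_ofFn] at ht
      obtain ⟨i, rfl⟩ := ht
      exact (Classical.choose_spec (h3 i)).2.2

variable {S}

theorem TLe.zero {w : NW X} : TLe S w (0 : LFree X k) :=
  ⟨[], by simp, lsum_nil.symm, by simp⟩

theorem TLt.zero {w : NW X} : TLt S w (0 : LFree X k) :=
  ⟨[], by simp, lsum_nil.symm, by simp⟩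

theorem TLe.add {w : NW X} {h₁ h₂ : LFree X k} (H₁ : TLe S w h₁) (H₂ : TLe S w h₂) :
    TLe S w (h₁ + h₂) := by
  obtain ⟨l₁, a1, b1, c1⟩ := H₁
  obtain ⟨l₂, a2, b2, c2⟩ := H₂
  refine ⟨l₁ ++ l₂, ?_, by rw [lsum_append, b1, b2], ?_⟩ <;>
    (intro t ht; rcases List.mem_append.mp ht with h | h)
  · exact a1 t h
  · exact a2 t h
  · exact c1 t h
  · exact c2 t h

theorem TLt.add {w : NW X} {h₁ h₂ : LFree X k} (H₁ : TLt S w h₁) (H₂ : TLt S w h₂) :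
    TLt S w (h₁ + h₂) := by
  obtain ⟨l₁, a1, b1, c1⟩ := H₁
  obtain ⟨l₂, a2, b2, c2⟩ := H₂
  refine ⟨l₁ ++ l₂, ?_, by rw [lsum_append, b1, b2], ?_⟩ <;>
    (intro t ht; rcases List.mem_append.mp ht with h | h)
  · exact a1 t h
  · exact a2 t h
  · exact c1 t h
  · exact c2 t h

theorem lsum_smul (κ : k) (l : List (LTm X k)) :
    lsum (l.map (fun t => (κ * t.1, t.2))) = κ • lsum l := by
  induction l with
  | nil => simp [lsum_nil]
  | cons t l ih =>
    simp only [List.map_cons, lsum_cons, ih, smul_add]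
    congr 1
    simp [tmVal, smul_smul]

theorem TLe.smul {w : NW X} {h : LFree X k} (κ : k) (H : TLe S w h) : TLe S w (κ • h) := by
  obtain ⟨l, a, b, c⟩ := H
  refine ⟨l.map (fun t => (κ * t.1, t.2)), ?_, by rw [lsum_smul, b], ?_⟩ <;>
    (intro t ht; rw [List.mem_map] at ht; obtain ⟨t', ht', rfl⟩ := ht)
  · exact a t' ht'
  · exact c t' ht'

theorem TLt.smul {w : NW X} {h : LFree X k} (κ : k) (H : TLt S w h) : TLt S w (κ • h) := by
  obtain ⟨l, a, b, c⟩ := H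
  refine ⟨l.map (fun t => (κ * t.1, t.2)), ?_, by rw [lsum_smul, b], ?_⟩ <;>
    (intro t ht; rw [List.mem_map] at ht; obtain ⟨t', ht', rfl⟩ := ht)
  · exact a t' ht'
  · exact c t' ht'

theorem TLe.sum {w : NW X} {ι : Type*} (A : Finset ι) (g : ι → LFree X k)
    (H : ∀ i ∈ A, TLe S w (g i)) : TLe S w (∑ i ∈ A, g i) := by
  classical
  induction A using Finset.induction with
  | empty => simpa using TLe.zero
  | insert _ _ hni ih =>
    rename_i a A'
    rw [Finset.sum_insert hni]
    exact (H a (by simp)).add (ih (fun i hi => H i (by simp [hi])))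

theorem TLt.sum {w : NW X} {ι : Type*} (A : Finset ι) (g : ι → LFree X k)
    (H : ∀ i ∈ A, TLt S w (g i)) : TLt S w (∑ i ∈ A, g i) := by
  classical
  induction A using Finset.induction with
  | empty => simpa using TLt.zero
  | insert _ _ hni ih =>
    rename_i a A'
    rw [Finset.sum_insert hni]
    exact (H a (by simp)).add (ih (fun i hi => H i (by simp [hi])))

theorem WLe.trans_lt {a : LW X} {w w' : NW X} (h : WLe a w) (h' : LW.LLt w.1 w'.1) :
    LW.LLt a w'.1 := by
  rcases h with h | h
  · rwa [h]
  · exact LW.llt_trans h h'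

theorem TLe.of_lt {w : NW X} {h : LFree X k} (H : TLt S w h) : TLe S w h := by
  obtain ⟨l, a, b, c⟩ := H
  exact ⟨l, a, b, fun t ht => .inr (c t ht)⟩

theorem TLe.weaken {w w' : NW X} {h : LFree X k} (H : TLe S w h)
    (hw : WLe w.1 w') : TLe S w' h := by
  obtain ⟨l, a, b, c⟩ := H
  refine ⟨l, a, b, fun t ht => ?_⟩
  rcases hw with hw | hw
  · rcases c t ht with h' | h'
    · exact .inl (h'.trans hw)
    · exact .inr (hw ▸ h')
  · exact .inr ((c t ht).trans_lt hw)

theorem TLe.to_lt {w w' : NW X} {h : LFree X k} (H : TLe S w h)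
    (hw : LW.LLt w.1 w'.1) : TLt S w' h := by
  obtain ⟨l, a, b, c⟩ := H
  exact ⟨l, a, b, fun t ht => (c t ht).trans_lt hw⟩

theorem TLe.single {w : NW X} (κ : k) (c : LCtx X) {s : LFree X k} {ws : NW X}
    (hs : s ∈ S) (hlw : NIsLw s ws) (hnorm : LW.Normal (c.subst ws.1))
    (hb : WLe (c.subst ws.1) w) : TLe S w (κ • lapp c s) := by
  refine ⟨[(κ, c, s, ws)], ?_, ?_, ?_⟩
  · intro t ht; simp at ht; subst ht; exact ⟨hs, hlw, hnorm⟩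
  · simp [lsum_cons, lsum_nil, tmVal]
  · intro t ht; simp at ht; subst ht; exact hb

theorem tmVal_support {t : LTm X k} (hOK : TmOK S t) {u : NW X}
    (hu : u ∈ (tmVal t).support) : WLe u.1 ⟨tmW t, hOK.2.2⟩ := by
  have hu' : u ∈ (lapp t.2.1 t.2.2.1).support := by
    have := Finsupp.support_smul (b := t.1) (g := lapp t.2.1 t.2.2.1)
    exact this hu
  obtain ⟨v, hv, rfl⟩ := lapp_support hu'
  rcases eq_or_ne v t.2.2.2 with rfl | hne
  · left
    show LW.nf _ = _
    rw [LW.nf_normal hOK.2.2]; rfl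
  · right
    have h1 := LW.llt_subst_nf v.2 t.2.2.2.2 (hOK.2.1.2 v hv hne) t.2.1
    have h2 : LW.nf (t.2.1.subst t.2.2.2.1) = tmW t := LW.nf_normal hOK.2.2
    rw [h2] at h1
    exact h1

theorem lsum_support {l : List (LTm X k)} {u : NW X} (hu : u ∈ (lsum l).support) :
    ∃ t ∈ l, u ∈ (tmVal t).support := by
  induction l with
  | nil => simp [lsum_nil] at hu
  | cons t l ih =>
    rw [lsum_cons] at hu
    have := Finsupp.support_add hu
    rcases Finset.mem_union.mp this with h | h
    · exact ⟨t, by simp, h⟩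
    · obtain ⟨t', ht', h'⟩ := ih h
      exact ⟨t', by simp [ht'], h'⟩

theorem TLe.support {w : NW X} {h : LFree X k} (H : TLe S w h) {u : NW X}
    (hu : u ∈ h.support) : WLe u.1 w := by
  obtain ⟨l, a, b, c⟩ := H
  subst b
  obtain ⟨t, ht, hu'⟩ := lsum_support hu
  have h1 := tmVal_support (a t ht) hu'
  rcases h1 with h1 | h1
  · rcases c t ht with h2 | h2
    · exact .inl (by rw [h1]; exact h2)
    · exact .inr (h1 ▸ h2)
  · rcases c t ht with h2 | h2
    · exact .inr (h2 ▸ h1)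
    · exact .inr (LW.llt_trans h1 h2)

theorem lsum_apply (l : List (LTm X k)) (u : NW X) :
    (lsum l) u = (l.map (fun t => tmVal t u)).sum := by
  induction l with
  | nil => simp [lsum_nil]
  | cons t l ih => simp [lsum_cons, ih]

end RepMachinery
section LemmaN

variable {X k : Type} [Field k] [LinearOrder X] {S : Set (LFree X k)}

theorem LW.normal_s_inv {a b : LW X} (h : LW.Normal (LW.s a b)) :
    LW.Normal a ∧ LW.Normal b := by cases h with | suc ha hb => exact ⟨ha, hb⟩

theorem lapp_congr {c₁ c₂ : LCtx X}
    (h : ∀ v : NW X, LW.nf (c₁.subst v.1) = LW.nf (c₂.subst v.1)) (f : LFree X k) :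
    lapp c₁ f = lapp c₂ f := by
  unfold lapp
  congr 1
  funext v
  exact Subtype.ext (h v)

theorem lapp_lsum (c₀ : LCtx X) (l : List (LTm X k)) :
    lapp c₀ (lsum l) = lsum (l.map (fun t => (t.1, c₀.comp t.2.1, t.2.2))) := by
  induction l with
  | nil => simp [lsum_nil, lapp_zero]
  | cons t l ih =>
    rw [lsum_cons, lapp_add, ih, List.map_cons, lsum_cons]
    congr 1
    rw [tmVal, lapp_smul, lapp_lapp]
    rfl

theorem TLe.lsum_of {w : NW X} {l : List (LTm X k)}
    (H : ∀ t ∈ l, TLe S w (tmVal t)) : TLe S w (lsum l) := by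
  induction l with
  | nil => simpa [lsum_nil] using TLe.zero
  | cons t l ih =>
    rw [lsum_cons]
    exact (H t (by simp)).add (ih (fun t' ht' => H t' (by simp [ht'])))

theorem TLe.wrap {w w' : NW X} {h : LFree X k} (H : TLe S w h) (c₀ : LCtx X)
    (hn : ∀ a : LW X, LW.Normal a → WLe a w →
      LW.Normal (c₀.subst a) ∧ WLe (c₀.subst a) w') :
    TLe S w' (lapp c₀ h) := by
  obtain ⟨l, hOK, rfl, hb⟩ := H
  rw [lapp_lsum]
  refine ⟨_, ?_, rfl, ?_⟩
  · intro t' ht'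
    rw [List.mem_map] at ht'
    obtain ⟨t, ht, rfl⟩ := ht'
    obtain ⟨h1, h2, h3⟩ := hOK t ht
    refine ⟨h1, h2, ?_⟩
    show LW.Normal ((c₀.comp t.2.1).subst t.2.2.2.1)
    rw [LCtx.subst_comp]
    exact (hn _ h3 (hb t ht)).1
  · intro t' ht'
    rw [List.mem_map] at ht'
    obtain ⟨t, ht, rfl⟩ := ht'
    obtain ⟨h1, h2, h3⟩ := hOK t ht
    show WLe ((c₀.comp t.2.1).subst t.2.2.2.1) w'
    rw [LCtx.subst_comp]
    exact (hn _ h3 (hb t ht)).2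

end LemmaN
section LemmaNMain

variable {X k : Type} [Field k] [LinearOrder X] {S : Set (LFree X k)}

theorem lemmaN [WellFoundedLT X] (hRM : RightMultTrivial S) :
    ∀ (W : LW X) (hW : LW.Normal W) (c : LCtx X) (g : LFree X k) (wg : NW X),
      g ∈ S → NIsLw g wg → LW.nf (c.subst wg.1) = W → TLe S ⟨W, hW⟩ (lapp c g) := by
  intro W0
  refine LW.llt_wf.induction (C := fun W => ∀ (hW : LW.Normal W) (c : LCtx X)
    (g : LFree X k) (wg : NW X), g ∈ S → NIsLw g wg → LW.nf (c.subst wg.1) = W →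
    TLe S ⟨W, hW⟩ (lapp c g)) W0 ?_
  clear W0
  intro W IH hW c g wg hgS hglw hnf
  cases c with
  | hole =>
    have hwgW : wg.1 = W := by simpa [LCtx.subst, LW.nf_normal wg.2] using hnf
    have h1 := TLe.single (S := S) (w := ⟨W, hW⟩) 1 LCtx.hole hgS hglw
      (by simpa [LCtx.subst] using wg.2) (by simp [LCtx.subst, WLe, hwgW])
    simpa using h1
  | sR a c' =>
    have ha' : LW.Normal (LW.nf a) := LW.normal_nf a
    have hW' : LW.Normal (LW.nf (c'.subst wg.1)) := LW.normal_nf _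
    have hWeq : W = LW.s (LW.nf a) (LW.nf (c'.subst wg.1)) := by
      rw [← hnf]; simp [LCtx.subst, LW.nf]
    have hlt : LW.LLt (LW.nf (c'.subst wg.1)) W := by
      refine .size ?_
      rw [hWeq]
      simp [LW.szX]
      have := LW.szX_pos (LW.nf a)
      omega
    have hinner := IH _ hlt hW' c' g wg hgS hglw rfl
    have hrw : lapp (LCtx.sR a c') g = lapp ((LCtx.sR (LW.nf a) LCtx.hole).comp c') g := by
      refine lapp_congr (fun v => ?_) g
      simp [LCtx.subst, LCtx.comp, LW.nf, LW.nf_nf]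
    rw [hrw, ← lapp_lapp]
    refine hinner.wrap _ (fun b hb hble => ?_)
    refine ⟨LW.Normal.suc ha' hb, ?_⟩
    rcases hble with hble | hble
    · left; simp only [LCtx.subst] at hble ⊢; rw [hble, ← hWeq]
    · right; simp only [LCtx.subst]; rw [hWeq]; exact LW.llt_s2' hble
  | sL c' a =>
    have ha' : LW.Normal (LW.nf a) := LW.normal_nf a
    have hW' : LW.Normal (LW.nf (c'.subst wg.1)) := LW.normal_nf _
    have hWeq : W = LW.s (LW.nf (c'.subst wg.1)) (LW.nf a) := by
      rw [← hnf]; simp [LCtx.subst, LW.nf]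
    have hlt : LW.LLt (LW.nf (c'.subst wg.1)) W := by
      refine .size ?_
      rw [hWeq]
      simp [LW.szX]
      have := LW.szX_pos (LW.nf a)
      omega
    have hinner := IH _ hlt hW' c' g wg hgS hglw rfl
    have hrw : lapp (LCtx.sL c' a) g = lapp ((LCtx.sL LCtx.hole (LW.nf a)).comp c') g := by
      refine lapp_congr (fun v => ?_) g
      simp [LCtx.subst, LCtx.comp, LW.nf, LW.nf_nf]
    rw [hrw, ← lapp_lapp]
    refine hinner.wrap _ (fun b hb hble => ?_)
    refine ⟨LW.Normal.suc hb ha', ?_⟩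
    rcases hble with hble | hble
    · left; simp only [LCtx.subst] at hble ⊢; rw [hble, ← hWeq]
    · right; simp only [LCtx.subst]; rw [hWeq]; exact LW.llt_s1' hble
  | pR a c' =>
    have ha' : LW.Normal (LW.nf a) := LW.normal_nf a
    have hW' : LW.Normal (LW.nf (c'.subst wg.1)) := LW.normal_nf _
    have hWeq : W = LW.nfP (LW.nf a) (LW.nf (c'.subst wg.1)) := by
      rw [← hnf]; simp [LCtx.subst, LW.nf]
    cases hna : LW.nf a with
    | var x =>
      have hns : ∀ u1 u2, (LW.var x : LW X) ≠ LW.s u1 u2 := by intro u1 u2 h; cases h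
      have hWeq2 : W = LW.p (LW.var x) (LW.nf (c'.subst wg.1)) := by
        rw [hWeq, hna, LW.nfP_eq_of_ns hns]
      have hlt : LW.LLt (LW.nf (c'.subst wg.1)) W := by
        refine .size ?_
        rw [hWeq2]; simp [LW.szX]
      have hinner := IH _ hlt hW' c' g wg hgS hglw rfl
      have hrw : lapp (LCtx.pR a c') g =
          lapp ((LCtx.pR (LW.var x) LCtx.hole).comp c') g := by
        refine lapp_congr (fun v => ?_) g
        simp [LCtx.subst, LCtx.comp, LW.nf, LW.nf_nf, hna]
      rw [hrw, ← lapp_lapp]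
      refine hinner.wrap _ (fun b hb hble => ?_)
      have hnorm : LW.Normal (LW.p (LW.var x) b) := LW.Normal.pre (hna ▸ ha') hb hns
      refine ⟨by simpa [LCtx.subst] using hnorm, ?_⟩
      rcases hble with hble | hble
      · left; simp only [LCtx.subst] at hble ⊢; rw [hble, ← hWeq2]
      · right; simp only [LCtx.subst]; rw [hWeq2]; exact LW.llt_p2' hble
    | p d1 d2 =>
      have hns : ∀ u1 u2, (LW.p d1 d2 : LW X) ≠ LW.s u1 u2 := by intro u1 u2 h; cases h
      have hWeq2 : W = LW.p (LW.p d1 d2) (LW.nf (c'.subst wg.1)) := by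
        rw [hWeq, hna, LW.nfP_eq_of_ns hns]
      have hlt : LW.LLt (LW.nf (c'.subst wg.1)) W := by
        refine .size ?_
        rw [hWeq2]; simp [LW.szX]
        have := LW.szX_pos d1; have := LW.szX_pos d2
        omega
      have hinner := IH _ hlt hW' c' g wg hgS hglw rfl
      have hfix : LW.nf (LW.p d1 d2) = LW.p d1 d2 := LW.nf_normal (hna ▸ ha')
      have hrw : lapp (LCtx.pR a c') g =
          lapp ((LCtx.pR (LW.p d1 d2) LCtx.hole).comp c') g := by
        refine lapp_congr (fun v => ?_) g
        show LW.nf (LW.p a (c'.subst v.1)) =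
          LW.nf (LW.p (LW.p d1 d2) ((LCtx.hole.comp c').subst v.1))
        have e1 : LW.nf (LW.p a (c'.subst v.1)) =
            LW.nfP (LW.nf a) (LW.nf (c'.subst v.1)) := rfl
        have e2 : LW.nf (LW.p (LW.p d1 d2) (c'.subst v.1)) =
            LW.nfP (LW.nf (LW.p d1 d2)) (LW.nf (c'.subst v.1)) := rfl
        show LW.nf (LW.p a (c'.subst v.1)) = LW.nf (LW.p (LW.p d1 d2) (c'.subst v.1))
        rw [e1, e2, hna, hfix]
      rw [hrw, ← lapp_lapp]
      refine hinner.wrap _ (fun b hb hble => ?_)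
      have hnorm : LW.Normal (LW.p (LW.p d1 d2) b) := LW.Normal.pre (hna ▸ ha') hb hns
      refine ⟨by simpa [LCtx.subst] using hnorm, ?_⟩
      rcases hble with hble | hble
      · left; simp only [LCtx.subst] at hble ⊢; rw [hble, ← hWeq2]
      · right; simp only [LCtx.subst]; rw [hWeq2]; exact LW.llt_p2' hble
    | s n1 n2 =>
      have hn12 := LW.normal_s_inv (hna ▸ ha')
      have hWeq2 : W = LW.s n1 (LW.nfP n2 (LW.nf (c'.subst wg.1))) := by
        rw [hWeq, hna]; rfl
      have hVlt : LW.LLt (LW.nfP n2 (LW.nf (c'.subst wg.1))) W := by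
        refine .size ?_
        rw [hWeq2]; simp [LW.szX]
        have := LW.szX_pos n1
        omega
      have hVnorm : LW.Normal (LW.nfP n2 (LW.nf (c'.subst wg.1))) :=
        LW.normal_nfP hn12.2 hW'
      have hVnf : LW.nf ((LCtx.pR n2 c').subst wg.1) =
          LW.nfP n2 (LW.nf (c'.subst wg.1)) := by
        simp [LCtx.subst, LW.nf, LW.nf_normal hn12.2]
      have hinner := IH _ hVlt hVnorm (LCtx.pR n2 c') g wg hgS hglw hVnf
      have hrw : lapp (LCtx.pR a c') g =
          lapp ((LCtx.sR n1 LCtx.hole).comp (LCtx.pR n2 c')) g := by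
        refine lapp_congr (fun v => ?_) g
        simp [LCtx.subst, LCtx.comp, LW.nf, LW.nf_nf, hna, LW.nf_normal hn12.1,
          LW.nf_normal hn12.2, LW.nfP]
      rw [hrw, ← lapp_lapp]
      refine hinner.wrap _ (fun b hb hble => ?_)
      refine ⟨by simpa [LCtx.subst] using LW.Normal.suc hn12.1 hb, ?_⟩
      rcases hble with hble | hble
      · left; simp only [LCtx.subst] at hble ⊢; rw [hble, ← hWeq2]
      · right; simp only [LCtx.subst]; rw [hWeq2]; exact LW.llt_s2' hble
  | pL c' a =>
    have ha' : LW.Normal (LW.nf a) := LW.normal_nf a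
    have hW' : LW.Normal (LW.nf (c'.subst wg.1)) := LW.normal_nf _
    have hWeq : W = LW.nfP (LW.nf (c'.subst wg.1)) (LW.nf a) := by
      rw [← hnf]; simp [LCtx.subst, LW.nf]
    have hlt : LW.LLt (LW.nf (c'.subst wg.1)) W := by
      refine .size ?_
      rw [hWeq]; simp [LW.szX_nfP, LW.szX_nf]
      have := LW.szX_pos (LW.nf a)
      have := LW.szX_pos a
      omega
    obtain ⟨l, hOK, hval, hb⟩ := IH _ hlt hW' c' g wg hgS hglw rfl
    have hrw : lapp (LCtx.pL c' a) g =
        lapp ((LCtx.pL LCtx.hole (LW.nf a)).comp c') g := by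
      refine lapp_congr (fun v => ?_) g
      simp [LCtx.subst, LCtx.comp, LW.nf, LW.nf_nf]
    rw [hrw, ← lapp_lapp, hval, lapp_lsum]
    refine TLe.lsum_of (fun t' ht' => ?_)
    rw [List.mem_map] at ht'
    obtain ⟨t, ht, rfl⟩ := ht'
    obtain ⟨γ, c₂, g₂, w₂⟩ := t
    obtain ⟨hg₂S, hlw₂, hWtn⟩ := hOK _ ht
    have hble := hb _ ht
    simp only [tmW] at hWtn hble ⊢
    have hcomp : (LCtx.pL LCtx.hole (LW.nf a)).comp c₂ = LCtx.pL c₂ (LW.nf a) := rfl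
    show TLe S ⟨W, hW⟩ (tmVal (γ, (LCtx.pL LCtx.hole (LW.nf a)).comp c₂, g₂, w₂))
    rw [tmVal, hcomp]
    have hVnf : LW.nf ((LCtx.pL c₂ (LW.nf a)).subst w₂.1) =
        LW.nfP (c₂.subst w₂.1) (LW.nf a) := by
      simp [LCtx.subst, LW.nf, LW.nf_nf, LW.nf_normal hWtn]
    have hVnorm : LW.Normal (LW.nfP (c₂.subst w₂.1) (LW.nf a)) :=
      LW.normal_nfP hWtn ha'
    have hVle : WLe (LW.nfP (c₂.subst w₂.1) (LW.nf a)) ⟨W, hW⟩ := by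
      rcases hble with hble | hble
      · left
        show LW.nfP _ _ = W
        rw [hble, ← hWeq]
      · right
        show LW.LLt (LW.nfP _ _) W
        rw [hWeq]
        exact LW.llt_nfP_left hble _
    refine TLe.smul γ ?_
    rcases hVle with hVe | hVl
    swap
    · exact (IH _ hVl hVnorm (LCtx.pL c₂ (LW.nf a)) g₂ w₂ hg₂S hlw₂ hVnf).weaken
        (.inr hVl)
    · replace hVe : LW.nfP (c₂.subst w₂.1) (LW.nf a) = W := hVe
      -- nfP (c₂.subst w₂.1) (nf a) = W
      cases hWtsh : c₂.subst w₂.1 with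
      | var x =>
        have hns : ∀ u1 u2, (LW.var x : LW X) ≠ LW.s u1 u2 := by intro u1 u2 h; cases h
        have h1 := TLe.single (S := S) (w := ⟨W, hW⟩) 1 (LCtx.pL c₂ (LW.nf a)) hg₂S hlw₂
          (by
            show LW.Normal (LW.p (c₂.subst w₂.1) (LW.nf a))
            rw [hWtsh]
            exact LW.Normal.pre (hWtsh ▸ hWtn) ha' hns)
          (by
            left
            show LW.p (c₂.subst w₂.1) (LW.nf a) = W
            rw [← hVe, hWtsh, LW.nfP_eq_of_ns hns])
        simpa using h1
      | p d1 d2 =>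
        have hns : ∀ u1 u2, (LW.p d1 d2 : LW X) ≠ LW.s u1 u2 := by intro u1 u2 h; cases h
        have h1 := TLe.single (S := S) (w := ⟨W, hW⟩) 1 (LCtx.pL c₂ (LW.nf a)) hg₂S hlw₂
          (by
            show LW.Normal (LW.p (c₂.subst w₂.1) (LW.nf a))
            rw [hWtsh]
            exact LW.Normal.pre (hWtsh ▸ hWtn) ha' hns)
          (by
            left
            show LW.p (c₂.subst w₂.1) (LW.nf a) = W
            rw [← hVe, hWtsh, LW.nfP_eq_of_ns hns])
        simpa using h1
      | s b1 b2 =>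
        have hb12 := LW.normal_s_inv (hWtsh ▸ hWtn)
        have hWe : W = LW.s b1 (LW.nfP b2 (LW.nf a)) := by rw [← hVe, hWtsh]; rfl
        cases c₂ with
        | hole =>
          simp only [LCtx.subst] at hWtsh
          have hres := hRM g₂ hg₂S w₂ hlw₂ ⟨b1, b2, hWtsh⟩ ⟨LW.nf a, ha'⟩
            (nfN ((LCtx.pL LCtx.hole (LW.nf a)).subst w₂.1))
            (lapp_lead hlw₂ (LCtx.pL LCtx.hole (LW.nf a)))
          have hwfv : (nfN ((LCtx.pL LCtx.hole (LW.nf a)).subst w₂.1)) = ⟨W, hW⟩ := by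
            refine Subtype.ext ?_
            show LW.nf (LW.p w₂.1 (LW.nf a)) = W
            have h0 : LW.nf (LW.p w₂.1 (LW.nf a)) =
                LW.nfP (LW.nf w₂.1) (LW.nf (LW.nf a)) := rfl
            rw [h0, LW.nf_nf, LW.nf_normal w₂.2]
            exact hVe
          rw [hwfv] at hres
          exact TLe_iff_NTrivLe S |>.mpr hres
        | sR e c₃ =>
          simp only [LCtx.subst] at hWtsh
          injection hWtsh with he hc₃
          have hV2nf : LW.nf ((LCtx.pL c₃ (LW.nf a)).subst w₂.1) =
              LW.nfP b2 (LW.nf a) := by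
            simp [LCtx.subst, LW.nf, LW.nf_nf, hc₃, LW.nf_normal hb12.2]
          have hV2lt : LW.LLt (LW.nfP b2 (LW.nf a)) W := by
            refine .size ?_
            rw [hWe]; simp [LW.szX, LW.szX_nfP]
            have := LW.szX_pos b1
            omega
          have hinner := IH _ hV2lt (LW.normal_nfP hb12.2 ha')
            (LCtx.pL c₃ (LW.nf a)) g₂ w₂ hg₂S hlw₂ hV2nf
          have hrw2 : lapp (LCtx.pL (LCtx.sR e c₃) (LW.nf a)) g₂ =
              lapp ((LCtx.sR b1 LCtx.hole).comp (LCtx.pL c₃ (LW.nf a))) g₂ := by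
            refine lapp_congr (fun v => ?_) g₂
            simp [LCtx.subst, LCtx.comp, LW.nf, LW.nf_nf, LW.nfP, he,
              LW.nf_normal hb12.1]
          rw [hrw2, ← lapp_lapp]
          refine hinner.wrap _ (fun b hbn hble' => ?_)
          refine ⟨by simpa [LCtx.subst] using LW.Normal.suc hb12.1 hbn, ?_⟩
          rcases hble' with h' | h'
          · left; simp only [LCtx.subst] at h' ⊢; rw [h', ← hWe]
          · right; simp only [LCtx.subst]; rw [hWe]; exact LW.llt_s2' h'
        | sL c₃ e =>
          simp only [LCtx.subst] at hWtsh
          injection hWtsh with hc₃ he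
          have hEnorm : LW.Normal (LW.nfP b2 (LW.nf a)) := LW.normal_nfP hb12.2 ha'
          have hV2nf : LW.nf (c₃.subst w₂.1) = b1 := by rw [hc₃, LW.nf_normal hb12.1]
          have hV2lt : LW.LLt b1 W := by
            refine .size ?_
            rw [hWe]; simp [LW.szX, LW.szX_nfP]
            have := LW.szX_pos b2; have := LW.szX_pos (LW.nf a)
            omega
          have hinner := IH _ hV2lt hb12.1 c₃ g₂ w₂ hg₂S hlw₂ hV2nf
          have hrw2 : lapp (LCtx.pL (LCtx.sL c₃ e) (LW.nf a)) g₂ =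
              lapp ((LCtx.sL LCtx.hole (LW.nfP b2 (LW.nf a))).comp c₃) g₂ := by
            refine lapp_congr (fun v => ?_) g₂
            simp [LCtx.subst, LCtx.comp, LW.nf, LW.nf_nf, LW.nfP, he,
              LW.nf_normal hb12.2, LW.nf_normal hEnorm]
          rw [hrw2, ← lapp_lapp]
          refine hinner.wrap _ (fun b hbn hble' => ?_)
          refine ⟨by simpa [LCtx.subst] using LW.Normal.suc hbn hEnorm, ?_⟩
          rcases hble' with h' | h'
          · left; simp only [LCtx.subst] at h' ⊢; rw [h', ← hWe]
          · right; simp only [LCtx.subst]; rw [hWe]; exact LW.llt_s1' h'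
        | pL c₃ e => simp [LCtx.subst] at hWtsh
        | pR e c₃ => simp [LCtx.subst] at hWtsh

theorem lemmaN' [WellFoundedLT X] (hRM : RightMultTrivial S) (c : LCtx X)
    {g : LFree X k} {wg : NW X} (hgS : g ∈ S) (hglw : NIsLw g wg) :
    TLe S ⟨LW.nf (c.subst wg.1), LW.normal_nf _⟩ (lapp c g) :=
  lemmaN hRM _ _ c g wg hgS hglw rfl

end LemmaNMain
section Overlap

variable {X : Type}

theorem overlap : ∀ (c₁ c₂ : LCtx X) (u₁ u₂ : LW X), c₁.subst u₁ = c₂.subst u₂ →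
    (∃ d, c₂ = c₁.comp d ∧ u₁ = d.subst u₂) ∨
    (∃ d, c₁ = c₂.comp d ∧ u₂ = d.subst u₁) ∨
    (∃ (k₁ k₂ : LW X → LCtx X), c₁ = k₁ u₂ ∧ c₂ = k₂ u₁ ∧
      ∀ x y, (k₁ y).subst x = (k₂ x).subst y) := by
  intro c₁
  induction c₁ with
  | hole =>
    intro c₂ u₁ u₂ h
    exact .inl ⟨c₂, rfl, h⟩
  | pL c w ih =>
    intro c₂ u₁ u₂ h
    cases c₂ with
    | hole => exact .inr (.inl ⟨LCtx.pL c w, rfl, h.symm⟩)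
    | pL c' w' =>
      simp only [LCtx.subst] at h
      injection h with h1 h2
      subst h2
      rcases ih c' u₁ u₂ h1 with ⟨d, hd1, hd2⟩ | ⟨d, hd1, hd2⟩ | ⟨k₁, k₂, hk1, hk2, hk⟩
      · exact .inl ⟨d, by rw [hd1]; rfl, hd2⟩
      · exact .inr (.inl ⟨d, by rw [hd1]; rfl, hd2⟩)
      · exact .inr (.inr ⟨fun y => LCtx.pL (k₁ y) w, fun x => LCtx.pL (k₂ x) w,
          by simp only [hk1], by simp only [hk2], fun x y => by simp [LCtx.subst, hk x y]⟩)
    | pR w' c' =>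
      simp only [LCtx.subst] at h
      injection h with h1 h2
      exact .inr (.inr ⟨fun y => LCtx.pL c (c'.subst y), fun x => LCtx.pR (c.subst x) c',
        by simp only [h2], by simp only [h1], fun x y => by simp [LCtx.subst]⟩)
    | sL c' w' => simp only [LCtx.subst] at h; cases h
    | sR w' c' => simp only [LCtx.subst] at h; cases h
  | pR w c ih =>
    intro c₂ u₁ u₂ h
    cases c₂ with
    | hole => exact .inr (.inl ⟨LCtx.pR w c, rfl, h.symm⟩)
    | pR w' c' =>
      simp only [LCtx.subst] at h
      injection h with h1 h2
      subst h1
      rcases ih c' u₁ u₂ h2 with ⟨d, hd1, hd2⟩ | ⟨d, hd1, hd2⟩ | ⟨k₁, k₂, hk1, hk2, hk⟩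
      · exact .inl ⟨d, by rw [hd1]; rfl, hd2⟩
      · exact .inr (.inl ⟨d, by rw [hd1]; rfl, hd2⟩)
      · exact .inr (.inr ⟨fun y => LCtx.pR w (k₁ y), fun x => LCtx.pR w (k₂ x),
          by simp only [hk1], by simp only [hk2], fun x y => by simp [LCtx.subst, hk x y]⟩)
    | pL c' w' =>
      simp only [LCtx.subst] at h
      injection h with h1 h2
      exact .inr (.inr ⟨fun y => LCtx.pR (c'.subst y) c, fun x => LCtx.pL c' (c.subst x),
        by simp only [h1], by simp only [h2], fun x y => by simp [LCtx.subst]⟩)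
    | sL c' w' => simp only [LCtx.subst] at h; cases h
    | sR w' c' => simp only [LCtx.subst] at h; cases h
  | sL c w ih =>
    intro c₂ u₁ u₂ h
    cases c₂ with
    | hole => exact .inr (.inl ⟨LCtx.sL c w, rfl, h.symm⟩)
    | sL c' w' =>
      simp only [LCtx.subst] at h
      injection h with h1 h2
      subst h2
      rcases ih c' u₁ u₂ h1 with ⟨d, hd1, hd2⟩ | ⟨d, hd1, hd2⟩ | ⟨k₁, k₂, hk1, hk2, hk⟩
      · exact .inl ⟨d, by rw [hd1]; rfl, hd2⟩
      · exact .inr (.inl ⟨d, by rw [hd1]; rfl, hd2⟩)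
      · exact .inr (.inr ⟨fun y => LCtx.sL (k₁ y) w, fun x => LCtx.sL (k₂ x) w,
          by simp only [hk1], by simp only [hk2], fun x y => by simp [LCtx.subst, hk x y]⟩)
    | sR w' c' =>
      simp only [LCtx.subst] at h
      injection h with h1 h2
      exact .inr (.inr ⟨fun y => LCtx.sL c (c'.subst y), fun x => LCtx.sR (c.subst x) c',
        by simp only [h2], by simp only [h1], fun x y => by simp [LCtx.subst]⟩)
    | pL c' w' => simp only [LCtx.subst] at h; cases h
    | pR w' c' => simp only [LCtx.subst] at h; cases h
  | sR w c ih =>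
    intro c₂ u₁ u₂ h
    cases c₂ with
    | hole => exact .inr (.inl ⟨LCtx.sR w c, rfl, h.symm⟩)
    | sR w' c' =>
      simp only [LCtx.subst] at h
      injection h with h1 h2
      subst h1
      rcases ih c' u₁ u₂ h2 with ⟨d, hd1, hd2⟩ | ⟨d, hd1, hd2⟩ | ⟨k₁, k₂, hk1, hk2, hk⟩
      · exact .inl ⟨d, by rw [hd1]; rfl, hd2⟩
      · exact .inr (.inl ⟨d, by rw [hd1]; rfl, hd2⟩)
      · exact .inr (.inr ⟨fun y => LCtx.sR w (k₁ y), fun x => LCtx.sR w (k₂ x),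
          by simp only [hk1], by simp only [hk2], fun x y => by simp [LCtx.subst, hk x y]⟩)
    | sL c' w' =>
      simp only [LCtx.subst] at h
      injection h with h1 h2
      exact .inr (.inr ⟨fun y => LCtx.sR (c'.subst y) c, fun x => LCtx.sL c' (c.subst x),
        by simp only [h1], by simp only [h2], fun x y => by simp [LCtx.subst]⟩)
    | pL c' w' => simp only [LCtx.subst] at h; cases h
    | pR w' c' => simp only [LCtx.subst] at h; cases h

end Overlap
section MainHelpers

variable {X k : Type} [Field k] [LinearOrder X] {S : Set (LFree X k)}

theorem TLt.lsum_of {w : NW X} {l : List (LTm X k)}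
    (H : ∀ t ∈ l, TLt S w (tmVal t)) : TLt S w (lsum l) := by
  induction l with
  | nil => simpa [lsum_nil] using TLt.zero
  | cons t l ih =>
    rw [lsum_cons]
    exact (H t (by simp)).add (ih (fun t' ht' => H t' (by simp [ht'])))

theorem wle_of_le {w₁ w₂ : NW X} (h : w₁ ≤ w₂) : WLe w₁.1 w₂ := by
  rcases lt_or_eq_of_le h with h | h
  · exact .inr (nw_lt_iff.mp h)
  · exact .inl (congrArg Subtype.val h)

theorem wrapN [WellFoundedLT X] (hRM : RightMultTrivial S) {v : NW X} {h : LFree X k}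
    (H : TLt S v h) (c₁ : LCtx X) {w : NW X} (hw : LW.nf (c₁.subst v.1) = w.1) :
    TLt S w (lapp c₁ h) := by
  obtain ⟨l, hOK, rfl, hb⟩ := H
  rw [lapp_lsum]
  refine TLt.lsum_of (fun t' ht' => ?_)
  rw [List.mem_map] at ht'
  obtain ⟨t, ht, rfl⟩ := ht'
  obtain ⟨h1, h2, h3⟩ := hOK t ht
  have hN := lemmaN' hRM (c₁.comp t.2.1) h1 h2
  have hlt : LW.LLt (LW.nf ((c₁.comp t.2.1).subst t.2.2.2.1)) w.1 := by
    rw [LCtx.subst_comp]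
    have := LW.llt_subst_nf h3 v.2 (hb t ht) c₁
    exact hw ▸ this
  have := (hN.to_lt hlt).smul t.1
  exact this

theorem tmVal_apply_lt {t : LTm X k} (hOK : TmOK S t) {w : NW X}
    (hlt : LW.LLt (tmW t) w.1) : tmVal t w = 0 := by
  by_contra hc
  rcases tmVal_support hOK (Finsupp.mem_support_iff.mpr hc) with he | hl
  · exact LW.llt_irrefl _ (he ▸ hlt)
  · exact LW.llt_asymm hlt hl

theorem tmVal_apply_top (hS : ∀ s ∈ S, NMonic s) {t : LTm X k} (hOK : TmOK S t)
    {w : NW X} (he : tmW t = w.1) : tmVal t w = t.1 := by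
  have hw : w = nfN (t.2.1.subst t.2.2.2.1) := by
    refine Subtype.ext ?_
    show w.1 = LW.nf (tmW t)
    rw [show LW.nf (tmW t) = tmW t from LW.nf_normal hOK.2.2, he]
  have h1 : (lapp t.2.1 t.2.2.1) w = t.2.2.1 t.2.2.2 := by
    rw [hw]; exact lapp_apply_lead hOK.2.1 t.2.1
  obtain ⟨w0, hw0, hc0⟩ := hS t.2.2.1 hOK.1
  have : w0 = t.2.2.2 := hw0.unique hOK.2.1
  rw [this] at hc0
  rw [tmVal, Finsupp.smul_apply, h1, hc0, smul_eq_mul, mul_one]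

theorem lsum_apply_zero {l : List (LTm X k)} {w : NW X}
    (h : ∀ t ∈ l, tmVal t w = 0) : (lsum l) w = 0 := by
  rw [lsum_apply]
  refine List.sum_eq_zero ?_
  intro x hx
  rw [List.mem_map] at hx
  obtain ⟨t, ht, rfl⟩ := hx
  exact h t ht

theorem exists_max_word [LinearOrder X] :
    ∀ (L : List (LW X)), L ≠ [] → ∃ m ∈ L, ∀ a ∈ L, a = m ∨ LW.LLt a m := by
  intro L
  induction L with
  | nil => intro h; exact absurd rfl h
  | cons x L ih =>
    intro _
    rcases eq_or_ne L [] with rfl | hne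
    · exact ⟨x, by simp, by simp⟩
    · obtain ⟨m, hm, hmax⟩ := ih hne
      rcases LW.llt_trichotomy x m with h | h | h
      · refine ⟨m, by simp [hm], ?_⟩
        intro a ha
        rcases List.mem_cons.mp ha with rfl | ha
        · exact .inr h
        · exact hmax a ha
      · subst h
        exact ⟨x, by simp, fun a ha => by
          rcases List.mem_cons.mp ha with rfl | ha
          · exact .inl rfl
          · exact hmax a ha⟩
      · refine ⟨x, by simp, ?_⟩
        intro a ha
        rcases List.mem_cons.mp ha with rfl | ha
        · exact .inl rfl
        · rcases hmax a ha with rfl | h'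
          · exact .inr h
          · exact .inr (LW.llt_trans h' h)

theorem lapp_eq_sum (c : LCtx X) (f : LFree X k) :
    lapp c f = ∑ v ∈ f.support, Finsupp.single (nfN (c.subst v.1)) (f v) := rfl

theorem disjoint_swap (k₁ k₂ : LW X → LCtx X)
    (hk : ∀ x y, (k₁ y).subst x = (k₂ x).subst y) (s₁ s₂ : LFree X k) :
    ∑ y ∈ s₂.support, s₂ y • lapp (k₁ y.1) s₁ =
    ∑ x ∈ s₁.support, s₁ x • lapp (k₂ x.1) s₂ := by
  have h1 : ∀ y : NW X, s₂ y • lapp (k₁ y.1) s₁ =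
      ∑ x ∈ s₁.support, Finsupp.single (nfN ((k₁ y.1).subst x.1)) (s₂ y * s₁ x) := by
    intro y
    rw [lapp_eq_sum, Finset.smul_sum]
    exact Finset.sum_congr rfl (fun x _ => by rw [Finsupp.smul_single, smul_eq_mul])
  have h2 : ∀ x : NW X, s₁ x • lapp (k₂ x.1) s₂ =
      ∑ y ∈ s₂.support, Finsupp.single (nfN ((k₂ x.1).subst y.1)) (s₁ x * s₂ y) := by
    intro x
    rw [lapp_eq_sum, Finset.smul_sum]
    exact Finset.sum_congr rfl (fun y _ => by rw [Finsupp.smul_single, smul_eq_mul])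
  calc ∑ y ∈ s₂.support, s₂ y • lapp (k₁ y.1) s₁
      = ∑ y ∈ s₂.support, ∑ x ∈ s₁.support,
          Finsupp.single (nfN ((k₁ y.1).subst x.1)) (s₂ y * s₁ x) :=
        Finset.sum_congr rfl (fun y _ => h1 y)
    _ = ∑ x ∈ s₁.support, ∑ y ∈ s₂.support,
          Finsupp.single (nfN ((k₁ y.1).subst x.1)) (s₂ y * s₁ x) := Finset.sum_comm
    _ = ∑ x ∈ s₁.support, s₁ x • lapp (k₂ x.1) s₂ := by
        refine Finset.sum_congr rfl (fun x _ => ?_)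
        rw [h2 x]
        refine Finset.sum_congr rfl (fun y _ => ?_)
        rw [← hk x.1 y.1, mul_comm]

end MainHelpers
section KeyMerge

variable {X k : Type} [Field k] [LinearOrder X] {S : Set (LFree X k)}

theorem key_merge [WellFoundedLT X] (hS : ∀ s ∈ S, NMonic s) (hGSB : NIsGSB S)
    {w : NW X} (a b : LTm X k) (ha : TmOK S a) (hb : TmOK S b)
    (hta : tmW a = w.1) (htb : tmW b = w.1) :
    ∃ (t : LTm X k) (extra : LFree X k), TmOK S t ∧ tmW t = w.1 ∧ t.1 = a.1 + b.1 ∧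
      TLt S w extra ∧ tmVal a + tmVal b = tmVal t + extra := by
  obtain ⟨α, c₁, s₁, w₁⟩ := a
  obtain ⟨β, c₂, s₂, w₂⟩ := b
  obtain ⟨hs₁, hlw₁, hn₁⟩ := ha
  obtain ⟨hs₂, hlw₂, hn₂⟩ := hb
  simp only [tmW] at hta htb hn₁ hn₂ ⊢
  simp only at hs₁ hs₂ hlw₁ hlw₂
  have heq : c₁.subst w₁.1 = c₂.subst w₂.1 := hta.trans htb.symm
  have hnfw : ∀ u : LW X, u = w.1 → LW.nf u = w.1 := by
    rintro u rfl; exact LW.nf_normal w.2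
  rcases overlap c₁ c₂ w₁.1 w₂.1 heq with ⟨d, hd1, hd2⟩ | ⟨d, hd1, hd2⟩ |
    ⟨k₁, k₂, hk1, hk2, hk⟩
  · -- c₂ = c₁.comp d : inclusion composition (s₁, s₂)
    have hIT := hGSB.2 s₁ hs₁ s₂ hs₂ d w₁ w₂ hlw₁ hlw₂ (hd2 ▸ w₁.2) hd2
    have hTLt : TLt S w₁ (s₁ - lapp d s₂) := (TLt_iff_NTrivLt S).mpr hIT
    have hextra : TLt S w (α • lapp c₁ (s₁ - lapp d s₂)) :=
      (wrapN hGSB.1 hTLt c₁ (hnfw _ hta)).smul α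
    refine ⟨(α + β, c₂, s₂, w₂), α • lapp c₁ (s₁ - lapp d s₂), ⟨hs₂, hlw₂, hn₂⟩,
      htb, rfl, hextra, ?_⟩
    have h1 : lapp c₁ s₁ = lapp c₂ s₂ + lapp c₁ (s₁ - lapp d s₂) := by
      rw [lapp_sub, hd1, lapp_lapp]; abel
    simp only [tmVal]
    rw [h1, add_smul, smul_add]
    abel
  · -- c₁ = c₂.comp d : inclusion composition (s₂, s₁)
    have hIT := hGSB.2 s₂ hs₂ s₁ hs₁ d w₂ w₁ hlw₂ hlw₁ (hd2 ▸ w₂.2) hd2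
    have hTLt : TLt S w₂ (s₂ - lapp d s₁) := (TLt_iff_NTrivLt S).mpr hIT
    have hextra : TLt S w (β • lapp c₂ (s₂ - lapp d s₁)) :=
      (wrapN hGSB.1 hTLt c₂ (hnfw _ htb)).smul β
    refine ⟨(α + β, c₁, s₁, w₁), β • lapp c₂ (s₂ - lapp d s₁), ⟨hs₁, hlw₁, hn₁⟩,
      hta, rfl, hextra, ?_⟩
    have h1 : lapp c₂ s₂ = lapp c₁ s₁ + lapp c₂ (s₂ - lapp d s₁) := by
      rw [lapp_sub, hd1, lapp_lapp]; abel
    simp only [tmVal]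
    rw [h1, add_smul, smul_add]
    abel
  · -- disjoint
    have hAB := disjoint_swap k₁ k₂ hk s₁ s₂
    have hmon₁ : s₁ w₁ = 1 := by
      obtain ⟨w0, hw0, hc0⟩ := hS s₁ hs₁
      rwa [hw0.unique hlw₁] at hc0
    have hmon₂ : s₂ w₂ = 1 := by
      obtain ⟨w0, hw0, hc0⟩ := hS s₂ hs₂
      rwa [hw0.unique hlw₂] at hc0
    set E₁ : LFree X k := ∑ y ∈ s₂.support.erase w₂, s₂ y • lapp (k₁ y.1) s₁ with hE₁
    set E₂ : LFree X k := ∑ x ∈ s₁.support.erase w₁, s₁ x • lapp (k₂ x.1) s₂ with hE₂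
    have hA : ∑ y ∈ s₂.support, s₂ y • lapp (k₁ y.1) s₁ = lapp c₁ s₁ + E₁ := by
      rw [← Finset.add_sum_erase _ _ hlw₂.1, hmon₂, one_smul, ← hk1]
    have hB : ∑ x ∈ s₁.support, s₁ x • lapp (k₂ x.1) s₂ = lapp c₂ s₂ + E₂ := by
      rw [← Finset.add_sum_erase _ _ hlw₁.1, hmon₁, one_smul, ← hk2]
    have hkey : lapp c₁ s₁ = lapp c₂ s₂ + E₂ - E₁ := by
      have h0 := hA
      rw [hAB, hB] at h0
      exact eq_sub_of_add_eq h0.symm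
    have hE₂lt : TLt S w E₂ := by
      refine TLt.sum _ _ (fun x hx => ?_)
      have hxs : x ∈ s₁.support := Finset.mem_of_mem_erase hx
      have hxne : x ≠ w₁ := Finset.ne_of_mem_erase hx
      have hxlt : LW.LLt x.1 w₁.1 := hlw₁.2 x hxs hxne
      have hN := lemmaN' hGSB.1 (k₂ x.1) hs₂ hlw₂
      have hb : LW.LLt (LW.nf ((k₂ x.1).subst w₂.1)) w.1 := by
        rw [← hk x.1 w₂.1, ← hk1]
        have := LW.llt_subst_nf x.2 w₁.2 hxlt c₁
        rwa [hnfw _ hta] at this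
      exact (hN.to_lt hb).smul _
    have hE₁lt : TLt S w E₁ := by
      refine TLt.sum _ _ (fun y hy => ?_)
      have hys : y ∈ s₂.support := Finset.mem_of_mem_erase hy
      have hyne : y ≠ w₂ := Finset.ne_of_mem_erase hy
      have hylt : LW.LLt y.1 w₂.1 := hlw₂.2 y hys hyne
      have hN := lemmaN' hGSB.1 (k₁ y.1) hs₁ hlw₁
      have hb : LW.LLt (LW.nf ((k₁ y.1).subst w₁.1)) w.1 := by
        rw [hk w₁.1 y.1, ← hk2]
        have := LW.llt_subst_nf y.2 w₂.2 hylt c₂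
        rwa [hnfw _ htb] at this
      exact (hN.to_lt hb).smul _
    have hextra : TLt S w (α • (E₂ - E₁)) := by
      refine TLt.smul α ?_
      rw [sub_eq_add_neg]
      refine hE₂lt.add ?_
      have := hE₁lt.smul (-1 : k)
      simpa using this
    refine ⟨(α + β, c₂, s₂, w₂), α • (E₂ - E₁), ⟨hs₂, hlw₂, hn₂⟩, htb, rfl, hextra, ?_⟩
    simp only [tmVal]
    rw [hkey]
    module

end KeyMerge
section MainI2II

variable {X k : Type} [Field k] [LinearOrder X] {S : Set (LFree X k)}

/-- reducibility of a normal word: it is of the form u|_{s̄} for a normal s-word. -/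
abbrev NRed (S : Set (LFree X k)) (wf : NW X) : Prop :=
  ∃ (c : LCtx X) (s : LFree X k) (ws : NW X),
    s ∈ S ∧ NIsLw s ws ∧ LW.Normal (c.subst ws.1) ∧ wf.1 = c.subst ws.1

theorem gsb_main [WellFoundedLT X] (hS : ∀ s ∈ S, NMonic s) (hGSB : NIsGSB S) :
    ∀ (w : NW X) (f : LFree X k), f ≠ 0 → TLe S w f → ∀ wf, NIsLw f wf → NRed S wf := by
  intro w0
  induction w0 using WellFoundedLT.induction with
  | _ w IHout =>
  classical
  set top : LTm X k → Bool := fun t => decide (tmW t = w.1) with htop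
  have htopval : ∀ t : LTm X k, top t = true ↔ tmW t = w.1 := by
    intro t; simp [htop]
  -- the case where all terms are strictly below w
  have hempty : ∀ (l : List (LTm X k)) (f : LFree X k), (∀ t ∈ l, TmOK S t) →
      f = lsum l → (∀ t ∈ l, LW.LLt (tmW t) w.1) → f ≠ 0 →
      ∀ wf, NIsLw f wf → NRed S wf := by
    intro l f hOK hval hstrict hf wf hwf
    have hlne : l ≠ [] := by
      rintro rfl
      exact hf (by rw [hval, lsum_nil])
    have hmapne : l.map tmW ≠ [] := by simpa using hlne
    obtain ⟨m, hm, hmax⟩ := exists_max_word (l.map tmW) hmapne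
    rw [List.mem_map] at hm
    obtain ⟨t₀, ht₀, hmt₀⟩ := hm
    have hmnorm : LW.Normal m := hmt₀ ▸ (hOK t₀ ht₀).2.2
    have hmlt : LW.LLt m w.1 := hmt₀ ▸ hstrict t₀ ht₀
    have hTLe : TLe S ⟨m, hmnorm⟩ f := by
      refine ⟨l, hOK, hval, fun t ht => ?_⟩
      rcases hmax (tmW t) (List.mem_map_of_mem ht) with h | h
      · exact .inl h
      · exact .inr h
    exact IHout ⟨m, hmnorm⟩ (nw_lt_iff.mpr hmlt) f hf hTLe wf hwf
  suffices Q : ∀ (n : ℕ) (l : List (LTm X k)) (f : LFree X k), (∀ t ∈ l, TmOK S t) →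
      f = lsum l → (∀ t ∈ l, WLe (tmW t) w) → (l.filter top).length ≤ n → f ≠ 0 →
      ∀ wf, NIsLw f wf → NRed S wf by
    intro f hf hTLe wf hwf
    obtain ⟨l, hOK, hval, hb⟩ := hTLe
    exact Q (l.filter top).length l f hOK hval hb le_rfl hf wf hwf
  intro n
  induction n with
  | zero =>
    intro l f hOK hval hb hcount hf wf hwf
    have hFnil : l.filter top = [] := List.length_eq_zero_iff.mp (Nat.le_zero.mp hcount)
    refine hempty l f hOK hval (fun t ht => ?_) hf wf hwf
    have hne : tmW t ≠ w.1 := by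
      intro he
      have : t ∈ l.filter top := List.mem_filter.mpr ⟨ht, (htopval t).mpr he⟩
      rw [hFnil] at this
      simp at this
    rcases hb t ht with h | h
    · exact absurd h hne
    · exact h
  | succ n IHn =>
    intro l f hOK hval hb hcount hf wf hwf
    cases hF : l.filter top with
    | nil =>
      refine hempty l f hOK hval (fun t ht => ?_) hf wf hwf
      have hne : tmW t ≠ w.1 := by
        intro he
        have : t ∈ l.filter top := List.mem_filter.mpr ⟨ht, (htopval t).mpr he⟩
        rw [hF] at this
        simp at this
      rcases hb t ht with h | h
      · exact absurd h hne
      · exact h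
    | cons a F' =>
      have hperm : List.Perm (l.filter top ++ l.filter (fun t => !top t)) l :=
        List.filter_append_perm top l
      set R := l.filter (fun t => !top t) with hR
      have hRmem : ∀ t ∈ R, t ∈ l ∧ LW.LLt (tmW t) w.1 := by
        intro t ht
        rw [hR, List.mem_filter] at ht
        refine ⟨ht.1, ?_⟩
        have hne : tmW t ≠ w.1 := by
          intro he
          have h1 := (htopval t).mpr he
          have h2 := ht.2
          rw [h1] at h2
          simp at h2
        rcases hb t ht.1 with h | h
        · exact absurd h hne
        · exact h
      have hfval : f = lsum (l.filter top) + lsum R := by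
        rw [hval, ← lsum_perm hperm, lsum_append]
      have haF : a ∈ l.filter top := by rw [hF]; simp
      have hamem : a ∈ l ∧ tmW a = w.1 := by
        rw [List.mem_filter] at haF
        exact ⟨haF.1, (htopval a).mp haF.2⟩
      cases F' with
      | nil =>
        -- exactly one top term
        by_cases hα : a.1 = 0
        · -- its coefficient is zero: all of f is strictly below w
          have hvz : tmVal a = 0 := by rw [tmVal, hα, zero_smul]
          have hfR : f = lsum R := by
            rw [hfval, hF, lsum_cons, lsum_nil, hvz]
            abel
          exact hempty R f (fun t ht => hOK t (hRmem t ht).1) hfR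
            (fun t ht => (hRmem t ht).2) hf wf hwf
        · -- nonzero coefficient: w is the leading word of f
          have hfw : f w = a.1 := by
            rw [hfval, hF, lsum_cons, lsum_nil, Finsupp.add_apply, Finsupp.add_apply]
            rw [tmVal_apply_top hS (hOK a hamem.1) hamem.2]
            rw [lsum_apply_zero (fun t ht => tmVal_apply_lt (hOK t (hRmem t ht).1)
              (hRmem t ht).2)]
            simp
          have hwsupp : w ∈ f.support := Finsupp.mem_support_iff.mpr (hfw ▸ hα)
          have hwfw : wf = w := by
            rcases eq_or_ne w wf with h | h
            · exact h.symm
            · exfalso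
              have h1 : LW.LLt w.1 wf.1 := hwf.2 w hwsupp h
              have h2 := TLe.support ⟨l, hOK, hval, hb⟩ hwf.1
              rcases h2 with h2 | h2
              · exact h (Subtype.ext h2.symm)
              · exact LW.llt_asymm h1 h2
          obtain ⟨α, c, s, ws⟩ := a
          obtain ⟨hs1, hs2, hs3⟩ := hOK _ hamem.1
          exact ⟨c, s, ws, hs1, hs2, hs3, by rw [hwfw]; exact hamem.2.symm⟩
      | cons b F'' =>
        -- at least two top terms: merge them
        have hbF : b ∈ l.filter top := by rw [hF]; simp
        have hbmem : b ∈ l ∧ tmW b = w.1 := by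
          rw [List.mem_filter] at hbF
          exact ⟨hbF.1, (htopval b).mp hbF.2⟩
        obtain ⟨t, extra, hOKt, htopt, _, hextra, hid⟩ :=
          key_merge hS hGSB a b (hOK a hamem.1) (hOK b hbmem.1) hamem.2 hbmem.2
        obtain ⟨lext, hextOK, hextval, hextb⟩ := hextra
        have hF''mem : ∀ u ∈ F'', u ∈ l ∧ tmW u = w.1 := by
          intro u hu
          have : u ∈ l.filter top := by rw [hF]; simp [hu]
          rw [List.mem_filter] at this
          exact ⟨this.1, (htopval u).mp this.2⟩
        set l' : List (LTm X k) := t :: (lext ++ (F'' ++ R)) with hl'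
        have hOK' : ∀ u ∈ l', TmOK S u := by
          intro u hu
          rw [hl'] at hu
          rcases List.mem_cons.mp hu with rfl | hu
          · exact hOKt
          · rcases List.mem_append.mp hu with hu | hu
            · exact hextOK u hu
            · rcases List.mem_append.mp hu with hu | hu
              · exact hOK u (hF''mem u hu).1
              · exact hOK u (hRmem u hu).1
        have hb' : ∀ u ∈ l', WLe (tmW u) w := by
          intro u hu
          rw [hl'] at hu
          rcases List.mem_cons.mp hu with rfl | hu
          · exact .inl htopt
          · rcases List.mem_append.mp hu with hu | hu
            · exact .inr (hextb u hu)
            · rcases List.mem_append.mp hu with hu | hu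
              · exact .inl (hF''mem u hu).2
              · exact .inr (hRmem u hu).2
        have hval' : f = lsum l' := by
          rw [hl', lsum_cons, lsum_append, lsum_append, ← hextval]
          rw [hfval, hF, lsum_cons, lsum_cons]
          rw [show tmVal a + (tmVal b + lsum F'') + lsum R
              = (tmVal a + tmVal b) + (lsum F'' + lsum R) by abel, hid]
          abel
        have hcount' : (l'.filter top).length ≤ n := by
          have h1 : lext.filter top = [] := by
            rw [List.filter_eq_nil_iff]
            intro u hu
            simp only [htopval, top, decide_eq_true_eq]
            intro he
            exact LW.llt_irrefl _ (he ▸ hextb u hu)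
          have h2 : F''.filter top = F'' := by
            rw [List.filter_eq_self]
            intro u hu
            exact (htopval u).mpr (hF''mem u hu).2
          have h3 : R.filter top = [] := by
            rw [List.filter_eq_nil_iff]
            intro u hu
            simp only [htopval, top, decide_eq_true_eq]
            intro he
            exact LW.llt_irrefl _ (he ▸ (hRmem u hu).2)
          have h4 : l'.filter top = t :: F'' := by
            rw [hl', List.filter_cons, if_pos ((htopval t).mpr htopt),
              List.filter_append, List.filter_append, h1, h2, h3]
            simp
          rw [h4]
          have h5 : (l.filter top).length ≤ n + 1 := hcount
          rw [hF] at h5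
          simp at h5 ⊢
          omega
        exact IHn l' f hOK' hval' hb' hcount' hf wf hwf

theorem gsb_implies_II [WellFoundedLT X] (hS : ∀ s ∈ S, NMonic s) (hGSB : NIsGSB S) :
    ∀ f ∈ NIdS S, f ≠ 0 → ∀ wf, NIsLw f wf → NRed S wf := by
  intro f hf hfne wf hwf
  have hTLe : f = 0 ∨ ∃ w, TLe S w f := by
    refine Submodule.span_induction ?_ ?_ ?_ ?_ hf
    · rintro x ⟨c, s, hsS, rfl⟩
      obtain ⟨ws, hws, _⟩ := hS s hsS
      exact .inr ⟨⟨LW.nf (c.subst ws.1), LW.normal_nf _⟩, lemmaN' hGSB.1 c hsS hws⟩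
    · exact .inl rfl
    · rintro x y _ _ (rfl | ⟨w₁, h₁⟩) hy
      · rcases hy with rfl | ⟨w₂, h₂⟩
        · exact .inl (by simp)
        · exact .inr ⟨w₂, by simpa using h₂.add (TLe.zero (w := w₂))⟩
      · rcases hy with rfl | ⟨w₂, h₂⟩
        · exact .inr ⟨w₁, by simpa using h₁.add (TLe.zero (w := w₁))⟩
        · refine .inr ⟨max w₁ w₂, ?_⟩
          exact (h₁.weaken (wle_of_le (le_max_left _ _))).add
            (h₂.weaken (wle_of_le (le_max_right _ _)))
    · rintro κ x _ (rfl | ⟨w₁, h₁⟩)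
      · exact .inl (by simp)
      · exact .inr ⟨w₁, h₁.smul κ⟩
  rcases hTLe with rfl | ⟨w, hw⟩
  · exact absurd rfl hfne
  · exact gsb_main hS hGSB w f hfne hw wf hwf

end MainI2II
section II2I

variable {X k : Type} [Field k] [LinearOrder X] {S : Set (LFree X k)}

theorem lapp_mem_NIdS (c : LCtx X) {s : LFree X k} (hs : s ∈ S) :
    lapp c s ∈ NIdS S := Submodule.subset_span ⟨c, s, hs, rfl⟩

theorem mem_NIdS_of_mem {s : LFree X k} (hs : s ∈ S) : s ∈ NIdS S := by
  have := lapp_mem_NIdS (S := S) LCtx.hole hs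
  rwa [lapp_hole] at this

theorem lapp_lead_coeff (hS : ∀ s ∈ S, NMonic s) {s : LFree X k} {ws : NW X}
    (hs : s ∈ S) (hlw : NIsLw s ws) (c : LCtx X) {w : NW X}
    (hnorm : LW.Normal (c.subst ws.1)) (hweq : w.1 = c.subst ws.1) :
    (lapp c s) w = 1 := by
  have hw : w = nfN (c.subst ws.1) := by
    refine Subtype.ext ?_
    show w.1 = LW.nf (c.subst ws.1)
    rw [LW.nf_normal hnorm, hweq]
  rw [hw, lapp_apply_lead hlw]
  obtain ⟨w0, hw0, hc0⟩ := hS s hs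
  rwa [hw0.unique hlw] at hc0

theorem lapp_supp_le (hS : ∀ s ∈ S, NMonic s) {s : LFree X k} {ws : NW X}
    (hs : s ∈ S) (hlw : NIsLw s ws) (c : LCtx X) {w : NW X}
    (hnorm : LW.Normal (c.subst ws.1)) (hweq : w.1 = c.subst ws.1) {v : NW X}
    (hv : v ∈ (lapp c s).support) : v = w ∨ LW.LLt v.1 w.1 := by
  have hlead := lapp_lead hlw c
  rcases eq_or_ne v (nfN (c.subst ws.1)) with rfl | hne
  · left
    refine Subtype.ext ?_
    show LW.nf (c.subst ws.1) = w.1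
    rw [LW.nf_normal hnorm, hweq]
  · right
    have := hlead.2 v hv hne
    have he : (nfN (c.subst ws.1)).1 = w.1 := by
      show LW.nf (c.subst ws.1) = w.1
      rw [LW.nf_normal hnorm, hweq]
    rwa [he] at this

/-- The key lemma: assuming (II), every element of the ideal with leading word w is
trivially representable with bound w. -/
theorem II_TLe [WellFoundedLT X] (hS : ∀ s ∈ S, NMonic s)
    (hII : ∀ f ∈ NIdS S, f ≠ 0 → ∀ wf, NIsLw f wf → NRed S wf) :
    ∀ (w : NW X) (f : LFree X k), f ∈ NIdS S → f ≠ 0 → NIsLw f w → TLe S w f := by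
  intro w0
  induction w0 using WellFoundedLT.induction with
  | _ w IH =>
  intro f hf hfne hw
  obtain ⟨c, s, ws, hsS, hsws, hnorm, hweq⟩ := hII f hf hfne w hw
  set g := f - (f w) • lapp c s with hg
  have hgmem : g ∈ NIdS S := Submodule.sub_mem _ hf
    (Submodule.smul_mem _ _ (lapp_mem_NIdS c hsS))
  have hgw : g w = 0 := by
    rw [hg, Finsupp.sub_apply, Finsupp.smul_apply,
      lapp_lead_coeff hS hsS hsws c hnorm hweq]
    simp
  have hgsupp : ∀ v ∈ g.support, LW.LLt v.1 w.1 := by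
    intro v hv
    have hvne : v ≠ w := by
      rintro rfl
      exact (Finsupp.mem_support_iff.mp hv) hgw
    have hvmem : v ∈ f.support ∪ ((f w) • lapp c s).support := by
      have := Finsupp.support_sub (f := f) (g := (f w) • lapp c s)
      exact this (hg ▸ hv)
    rcases Finset.mem_union.mp hvmem with h | h
    · exact hw.2 v h hvne
    · have h2 : v ∈ (lapp c s).support := Finsupp.support_smul h
      rcases lapp_supp_le hS hsS hsws c hnorm hweq h2 with h3 | h3
      · exact absurd h3 hvne
      · exact h3
  have hT0 : TLe S w ((f w) • lapp c s) := TLe.single _ c hsS hsws hnorm (.inl hweq.symm)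
  rcases eq_or_ne g 0 with hg0 | hg0
  · have : f = (f w) • lapp c s := by
      have := sub_eq_zero.mp (hg ▸ hg0)
      exact this
    rw [this]
    exact hT0
  · obtain ⟨wg, hwg⟩ := exists_NIsLw hg0
    have hwglt : LW.LLt wg.1 w.1 := hgsupp wg hwg.1
    have hTg : TLe S w g :=
      (IH wg (nw_lt_iff.mpr hwglt) g hgmem hg0 hwg).weaken (.inr hwglt)
    have : f = (f w) • lapp c s + g := by rw [hg]; abel
    rw [this]
    exact hT0.add hTg

theorem II_implies_GSB [WellFoundedLT X] (hS : ∀ s ∈ S, NMonic s)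
    (hII : ∀ f ∈ NIdS S, f ≠ 0 → ∀ wf, NIsLw f wf → NRed S wf) : NIsGSB S := by
  constructor
  · intro f hfS wf hwf hsh v wfv hwfv
    have hmem : lapp (LCtx.pL LCtx.hole v.1) f ∈ NIdS S := lapp_mem_NIdS _ hfS
    have hne : lapp (LCtx.pL LCtx.hole v.1) f ≠ 0 := by
      intro h0
      rw [h0] at hwfv
      have := hwfv.1
      simp at this
    exact (TLe_iff_NTrivLe S).mp (II_TLe hS hII wfv _ hmem hne hwfv)
  · intro f hf g hg c wf wg hlwf hlwg hnorm hsubst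
    set h := f - lapp c g with hh
    have hmem : h ∈ NIdS S :=
      Submodule.sub_mem _ (mem_NIdS_of_mem hf) (lapp_mem_NIdS c hg)
    have hfwf : f wf = 1 := by
      obtain ⟨w0, hw0, hc0⟩ := hS f hf
      rwa [hw0.unique hlwf] at hc0
    have hhwf : h wf = 0 := by
      rw [hh, Finsupp.sub_apply, hfwf, lapp_lead_coeff hS hg hlwg c hnorm hsubst]
      simp
    have hhsupp : ∀ v ∈ h.support, LW.LLt v.1 wf.1 := by
      intro v hv
      have hvne : v ≠ wf := by
        rintro rfl
        exact (Finsupp.mem_support_iff.mp hv) hhwf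
      have hvmem : v ∈ f.support ∪ (lapp c g).support := by
        have := Finsupp.support_sub (f := f) (g := lapp c g)
        exact this (hh ▸ hv)
      rcases Finset.mem_union.mp hvmem with h1 | h1
      · exact hlwf.2 v h1 hvne
      · rcases lapp_supp_le hS hg hlwg c hnorm hsubst h1 with h3 | h3
        · exact absurd h3 hvne
        · exact h3
    rcases eq_or_ne h 0 with hh0 | hh0
    · rw [hh0]
      exact (TLt_iff_NTrivLt S).mp TLt.zero
    · obtain ⟨wh, hwh⟩ := exists_NIsLw hh0
      have hwhlt : LW.LLt wh.1 wf.1 := hhsupp wh hwh.1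
      exact (TLt_iff_NTrivLt S).mp
        ((II_TLe hS hII wh h hmem hh0 hwh).to_lt hwhlt)

end II2I
section IIIEquiv

variable {X k : Type} [Field k] [LinearOrder X] {S : Set (LFree X k)}

theorem irr_sup_eq_top [WellFoundedLT X] (hS : ∀ s ∈ S, NMonic s) :
    (Submodule.span k {h : LFree X k | ∃ w : NW X, ¬ NRed S w ∧ h = Finsupp.single w 1}
      ⊔ NIdS S) = ⊤ := by
  classical
  set M := Submodule.span k
      {h : LFree X k | ∃ w : NW X, ¬ NRed S w ∧ h = Finsupp.single w 1} ⊔ NIdS S with hM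
  rw [Submodule.eq_top_iff']
  have key : ∀ (w : NW X) (f : LFree X k), NIsLw f w → f ∈ M := by
    intro w0
    induction w0 using WellFoundedLT.induction with
    | _ w IH =>
    intro f hw
    obtain ⟨r, hrM, hrw, hrsupp⟩ : ∃ r : LFree X k, r ∈ M ∧ r w = 1 ∧
        ∀ v ∈ r.support, v = w ∨ LW.LLt v.1 w.1 := by
      by_cases hred : NRed S w
      · obtain ⟨c, s, ws, hsS, hlw, hnorm, hweq⟩ := hred
        exact ⟨lapp c s, Submodule.mem_sup_right (lapp_mem_NIdS c hsS),
          lapp_lead_coeff hS hsS hlw c hnorm hweq,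
          fun v hv => lapp_supp_le hS hsS hlw c hnorm hweq hv⟩
      · refine ⟨Finsupp.single w 1, Submodule.mem_sup_left
          (Submodule.subset_span ⟨w, hred, rfl⟩), by simp, fun v hv => ?_⟩
        left
        have := Finsupp.support_single_subset hv
        simpa using this
    set g := f - (f w) • r with hg
    have hgw : g w = 0 := by
      rw [hg, Finsupp.sub_apply, Finsupp.smul_apply, hrw]
      simp
    have hgsupp : ∀ v ∈ g.support, LW.LLt v.1 w.1 := by
      intro v hv
      have hvne : v ≠ w := by
        rintro rfl
        exact (Finsupp.mem_support_iff.mp hv) hgw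
      have hvmem : v ∈ f.support ∪ ((f w) • r).support := by
        have := Finsupp.support_sub (f := f) (g := (f w) • r)
        exact this (hg ▸ hv)
      rcases Finset.mem_union.mp hvmem with h | h
      · exact hw.2 v h hvne
      · rcases hrsupp v (Finsupp.support_smul h) with h3 | h3
        · exact absurd h3 hvne
        · exact h3
    have hfdec : f = g + (f w) • r := by rw [hg]; abel
    rcases eq_or_ne g 0 with hg0 | hg0
    · rw [hfdec, hg0, zero_add]
      exact Submodule.smul_mem _ _ hrM
    · obtain ⟨wg, hwg⟩ := exists_NIsLw hg0
      have hwglt : LW.LLt wg.1 w.1 := hgsupp wg hwg.1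
      have hgM : g ∈ M := IH wg (nw_lt_iff.mpr hwglt) g hwg
      rw [hfdec]
      exact Submodule.add_mem _ hgM (Submodule.smul_mem _ _ hrM)
  intro f
  rcases eq_or_ne f 0 with rfl | hf
  · exact Submodule.zero_mem _
  · obtain ⟨w, hw⟩ := exists_NIsLw hf
    exact key w f hw

theorem quot_span_top [WellFoundedLT X] (hS : ∀ s ∈ S, NMonic s) :
    Submodule.span k (Set.range (fun w : {w : NW X // ¬ NRed S w} =>
      Submodule.Quotient.mk (p := NIdS S) (Finsupp.single w.1 (1 : k)))) = ⊤ := by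
  rw [Submodule.eq_top_iff']
  intro x
  obtain ⟨f, rfl⟩ := Submodule.Quotient.mk_surjective (NIdS S) x
  have hf : f ∈ (Submodule.span k
      {h : LFree X k | ∃ w : NW X, ¬ NRed S w ∧ h = Finsupp.single w 1} ⊔ NIdS S) := by
    rw [irr_sup_eq_top hS]; trivial
  obtain ⟨a, ha, b, hb, hab⟩ := Submodule.mem_sup.mp hf
  have hmk : Submodule.Quotient.mk (p := NIdS S) f = (NIdS S).mkQ a := by
    rw [← hab]
    show (NIdS S).mkQ (a + b) = (NIdS S).mkQ a
    rw [map_add]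
    have hb0 : (NIdS S).mkQ b = 0 := (Submodule.Quotient.mk_eq_zero _).mpr hb
    rw [hb0, add_zero]
  rw [hmk]
  have h1 : (NIdS S).mkQ a ∈ Submodule.map ((NIdS S).mkQ)
      (Submodule.span k {h : LFree X k | ∃ w : NW X, ¬ NRed S w ∧
        h = Finsupp.single w 1}) := Submodule.mem_map_of_mem ha
  rw [Submodule.map_span] at h1
  refine Submodule.span_mono ?_ h1
  rintro y ⟨h, ⟨w, hwirr, rfl⟩, rfl⟩
  exact ⟨⟨w, hwirr⟩, rfl⟩

theorem II_implies_LI [WellFoundedLT X]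
    (hII : ∀ f ∈ NIdS S, f ≠ 0 → ∀ wf, NIsLw f wf → NRed S wf) :
    LinearIndependent k (fun w : {w : NW X // ¬ NRed S w} =>
      Submodule.Quotient.mk (p := NIdS S) (Finsupp.single w.1 (1 : k))) := by
  classical
  rw [linearIndependent_iff]
  intro l hl
  set f0 : LFree X k := ∑ i ∈ l.support, Finsupp.single i.1 (l i) with hf0
  have hmk : Finsupp.linearCombination k (fun w : {w : NW X // ¬ NRed S w} =>
      Submodule.Quotient.mk (p := NIdS S) (Finsupp.single w.1 (1 : k))) l
      = (NIdS S).mkQ f0 := by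
    rw [Finsupp.linearCombination_apply, Finsupp.sum, hf0, map_sum]
    refine Finset.sum_congr rfl (fun i _ => ?_)
    rw [← Submodule.mkQ_apply, ← map_smul]
    congr 1
    rw [Finsupp.smul_single, smul_eq_mul, mul_one]
  have hf0mem : f0 ∈ NIdS S := by
    rw [hmk] at hl
    exact (Submodule.Quotient.mk_eq_zero _).mp hl
  have hsupp : ∀ v ∈ f0.support, ¬ NRed S v := by
    intro v hv
    have := Finsupp.support_finset_sum hv
    rw [Finset.mem_biUnion] at this
    obtain ⟨i, hi, hvi⟩ := this
    have : v = i.1 := by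
      have := Finsupp.support_single_subset hvi
      simpa using this
    exact this ▸ i.2
  have hf00 : f0 = 0 := by
    by_contra h0
    obtain ⟨wf, hwf⟩ := exists_NIsLw h0
    exact hsupp wf hwf.1 (hII f0 hf0mem h0 wf hwf)
  ext i
  by_contra hi
  have himem : i ∈ l.support := Finsupp.mem_support_iff.mpr (by simpa using hi)
  have : f0 i.1 = l i := by
    rw [hf0, Finsupp.finset_sum_apply]
    rw [Finset.sum_eq_single i]
    · simp
    · intro j _ hj
      have : j.1 ≠ i.1 := fun h => hj (Subtype.ext h)
      simp [Finsupp.single_apply, this]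
    · intro h
      exact absurd himem h
  rw [hf00] at this
  simp at this
  exact hi (by simpa using this.symm)

theorem LI_implies_II [WellFoundedLT X] (hS : ∀ s ∈ S, NMonic s)
    (hli : LinearIndependent k (fun w : {w : NW X // ¬ NRed S w} =>
      Submodule.Quotient.mk (p := NIdS S) (Finsupp.single w.1 (1 : k)))) :
    ∀ f ∈ NIdS S, f ≠ 0 → ∀ wf, NIsLw f wf → NRed S wf := by
  classical
  have hC : ∀ f ∈ NIdS S, (∀ v ∈ f.support, ¬ NRed S v) → f = 0 := by
    intro f hf hirr
    set l : {w : NW X // ¬ NRed S w} →₀ k :=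
      f.subtypeDomain (fun w => ¬ NRed S w) with hldef
    have hsum : ∑ i ∈ l.support, Finsupp.single i.1 (l i) = f := by
      rw [hldef]
      have h1 : (f.subtypeDomain (fun w => ¬ NRed S w)).support
          = f.support.subtype _ := Finsupp.support_subtypeDomain
      rw [h1]
      have h2 : ∀ i : {w : NW X // ¬ NRed S w},
          Finsupp.single i.1 ((f.subtypeDomain (fun w => ¬ NRed S w)) i)
          = Finsupp.single i.1 (f i.1) := fun i => rfl
      calc ∑ i ∈ f.support.subtype _, Finsupp.single i.1
            ((f.subtypeDomain (fun w => ¬ NRed S w)) i)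
          = ∑ i ∈ f.support.subtype _, Finsupp.single i.1 (f i.1) :=
            Finset.sum_congr rfl (fun i _ => h2 i)
        _ = ∑ v ∈ f.support, Finsupp.single v (f v) :=
            Finset.sum_subtype_of_mem (fun v => Finsupp.single v (f v)) hirr
        _ = f := by
            rw [← Finsupp.sum]
            exact Finsupp.sum_single f
    have hcomb : Finsupp.linearCombination k (fun w : {w : NW X // ¬ NRed S w} =>
        Submodule.Quotient.mk (p := NIdS S) (Finsupp.single w.1 (1 : k))) l
        = (NIdS S).mkQ f := by
      rw [Finsupp.linearCombination_apply, Finsupp.sum, ← hsum, map_sum]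
      refine Finset.sum_congr rfl (fun i _ => ?_)
      rw [← Submodule.mkQ_apply, ← map_smul]
      congr 1
      rw [Finsupp.smul_single, smul_eq_mul, mul_one]
    have hl0 : l = 0 := by
      refine linearIndependent_iff.mp hli l ?_
      rw [hcomb, Submodule.mkQ_apply]
      exact (Submodule.Quotient.mk_eq_zero _).mpr hf
    ext v
    simp only [Finsupp.coe_zero, Pi.zero_apply]
    by_cases hv : NRed S v
    · by_contra hne
      exact hirr v (Finsupp.mem_support_iff.mpr hne) hv
    · have : l ⟨v, hv⟩ = 0 := by rw [hl0]; rfl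
      exact this
  have hD : ∀ (wbd : NW X), ∀ f ∈ NIdS S, ∀ w, NIsLw f w → ¬ NRed S w →
      (∀ v ∈ f.support, NRed S v → v < wbd) → False := by
    intro wbd0
    induction wbd0 using WellFoundedLT.induction with
    | _ wbd IH =>
    intro f hf w hw hirr hbd
    by_cases hex : ∃ v ∈ f.support, NRed S v
    · obtain ⟨v', hv', hred'⟩ := hex
      set T := f.support.filter (fun v => NRed S v) with hT
      have hTne : T.Nonempty := ⟨v', Finset.mem_filter.mpr ⟨hv', hred'⟩⟩
      set v₀ := T.max' hTne with hv₀def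
      have hv₀mem := Finset.mem_filter.mp (T.max'_mem hTne)
      obtain ⟨c, s, ws, hsS, hlw, hnorm, hveq⟩ := hv₀mem.2
      have hv₀w : v₀ ≠ w := fun h => hirr (h ▸ hv₀mem.2)
      have hv₀lt : LW.LLt v₀.1 w.1 := hw.2 v₀ hv₀mem.1 hv₀w
      set f₁ := f - (f v₀) • lapp c s with hf₁
      have hmem₁ : f₁ ∈ NIdS S := Submodule.sub_mem _ hf
        (Submodule.smul_mem _ _ (lapp_mem_NIdS c hsS))
      have hcoeff : (lapp c s) v₀ = 1 := lapp_lead_coeff hS hsS hlw c hnorm hveq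
      have hf₁v₀ : f₁ v₀ = 0 := by
        rw [hf₁, Finsupp.sub_apply, Finsupp.smul_apply, hcoeff]
        simp
      have hlappw : (lapp c s) w = 0 := by
        by_contra h0
        rcases lapp_supp_le hS hsS hlw c hnorm hveq
            (Finsupp.mem_support_iff.mpr h0) with h1 | h1
        · exact hv₀w (h1.symm)
        · exact LW.llt_asymm hv₀lt h1
      have hf₁w : f₁ w = f w := by
        rw [hf₁, Finsupp.sub_apply, Finsupp.smul_apply, hlappw]
        simp
      have hsupp₁ : ∀ v ∈ f₁.support, v ∈ f.support ∨ v ∈ (lapp c s).support := by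
        intro v hv
        have hvmem : v ∈ f.support ∪ ((f v₀) • lapp c s).support := by
          have := Finsupp.support_sub (f := f) (g := (f v₀) • lapp c s)
          exact this (hf₁ ▸ hv)
        rcases Finset.mem_union.mp hvmem with h | h
        · exact .inl h
        · exact .inr (Finsupp.support_smul h)
      have hw₁ : NIsLw f₁ w := by
        constructor
        · rw [Finsupp.mem_support_iff, hf₁w]
          exact Finsupp.mem_support_iff.mp hw.1
        · intro v hv hvne
          rcases hsupp₁ v hv with h | h
          · exact hw.2 v h hvne
          · rcases lapp_supp_le hS hsS hlw c hnorm hveq h with h1 | h1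
            · exact h1 ▸ hv₀lt
            · exact LW.llt_trans h1 hv₀lt
      have hbd₁ : ∀ v ∈ f₁.support, NRed S v → v < v₀ := by
        intro v hv hred
        have hvne : v ≠ v₀ := by
          rintro rfl
          exact (Finsupp.mem_support_iff.mp hv) hf₁v₀
        rcases hsupp₁ v hv with h | h
        · have : v ∈ T := Finset.mem_filter.mpr ⟨h, hred⟩
          exact lt_of_le_of_ne (Finset.le_max' T v this) hvne
        · rcases lapp_supp_le hS hsS hlw c hnorm hveq h with h1 | h1
          · exact absurd h1 hvne
          · exact nw_lt_iff.mpr h1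
      exact IH v₀ (hbd v₀ hv₀mem.1 hv₀mem.2) f₁ hmem₁ w hw₁ hirr hbd₁
    · have hf0 : f = 0 := hC f hf (fun v hv hr => hex ⟨v, hv, hr⟩)
      have := hw.1
      rw [hf0] at this
      simp at this
  intro f hf hfne wf hwf
  by_contra hirr
  refine hD wf f hf wf hwf hirr (fun v hv hr => ?_)
  have hvne : v ≠ wf := fun h => hirr (h ▸ hr)
  exact nw_lt_iff.mpr (hwf.2 v hv hvne)

end IIIEquiv
/-- Composition-Diamond lemma for L-algebras. For a set S of monic
elements of the free L-algebra L(X) with the weight-lexicographic monomial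
ordering on normal words, the following are equivalent:
(I) S is a Gröbner–Shirshov basis in L(X);
(II) the leading normal word of any nonzero f ∈ Id(S) is of the form u|_{s̄} for a
normal s-word u|_s, s ∈ S;
(III) Irr(S) is a k-basis of L(X)/Id(S). -/
theorem composition_diamond_L (X k : Type) [Field k] [LinearOrder X] [WellFoundedLT X]
    (S : Set (LFree X k)) (hS : ∀ s ∈ S, NMonic s) :
    (NIsGSB S ↔
      (∀ f ∈ NIdS S, f ≠ 0 → ∀ w, NIsLw f w →
        ∃ (c : LCtx X) (s : LFree X k) (ws : NW X),
          s ∈ S ∧ NIsLw s ws ∧ LW.Normal (c.subst ws.1) ∧ w.1 = c.subst ws.1)) ∧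
    (NIsGSB S ↔
      (LinearIndependent k
          (fun w : {w : NW X // ¬ ∃ (c : LCtx X) (s : LFree X k) (ws : NW X),
              s ∈ S ∧ NIsLw s ws ∧ LW.Normal (c.subst ws.1) ∧ w.1 = c.subst ws.1} =>
            Submodule.Quotient.mk (p := NIdS S) (Finsupp.single w.1 (1 : k))) ∧
        Submodule.span k (Set.range
          (fun w : {w : NW X // ¬ ∃ (c : LCtx X) (s : LFree X k) (ws : NW X),
              s ∈ S ∧ NIsLw s ws ∧ LW.Normal (c.subst ws.1) ∧ w.1 = c.subst ws.1} =>
            Submodule.Quotient.mk (p := NIdS S) (Finsupp.single w.1 (1 : k)))) = ⊤)) := by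
  
  constructor
  · constructor
    · intro hGSB
      exact fun f hf hfne w hw => gsb_implies_II hS hGSB f hf hfne w hw
    · intro hII
      exact II_implies_GSB hS hII
  · constructor
    · intro hGSB
      exact ⟨II_implies_LI (gsb_implies_II hS hGSB), quot_span_top hS⟩
    · rintro ⟨hli, _⟩
      exact II_implies_GSB hS (LI_implies_II hS hli)
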